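/- arXiv:1011.1719 — 5 statements merged into one kernel-verified Lean document; each statement's English description precedes it below -/
import Mathlib

section
/- Let n ≥ 1, let H : ℂ → Matrix (Fin n) (Fin n) ℂ be a smooth map such that H(z) is a Hermitian positive definite matrix for every z ∈ ℂ, and let κ₀ > 0. Assume that κ₀ · ∫_ℂ |s(z)|²_{H(z)} dA ≤ ∫_ℂ |∂̄s(z)|²_{H(z)} dA for every smooth compactly supported function s : ℂ → ℂⁿ. Then for every ε with 0 < ε < 2√κ₀ and every smooth compactly supported s : ℂ → ℂⁿ one has (κ₀/4) · ∫_ℂ |s(z)|²_{H(z)} e^{-ε|z|} dA ≤ ∫_ℂ |∂̄s(z)|²_{H(z)} e^{-ε|z|} dA. -/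
open Complex MeasureTheory Matrix
open scoped ComplexOrder

/-- The Wirtinger operator `∂̄f(z) = (1/2)(fderiv ℝ f z 1 + i • fderiv ℝ f z i)`. -/
noncomputable def dbar {V : Type*} [NormedAddCommGroup V] [NormedSpace ℂ V]
    (f : ℂ → V) (z : ℂ) : V :=
  (2 : ℝ)⁻¹ • (fderiv ℝ f z 1 + Complex.I • fderiv ℝ f z Complex.I)

/-- The pointwise squared norm `|v|²_H = Re(star v ⬝ᵥ (H *ᵥ v))`. -/
noncomputable def hnorm {n : ℕ} (H : Matrix (Fin n) (Fin n) ℂ) (v : Fin n → ℂ) : ℝ :=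
  (star v ⬝ᵥ H.mulVec v).re

section Aux

variable {n : ℕ}

lemma hnorm_nonneg {H : Matrix (Fin n) (Fin n) ℂ} (hH : H.PosSemidef) (v : Fin n → ℂ) :
    0 ≤ hnorm H v := by
  have := hH.dotProduct_mulVec_nonneg v
  rw [Complex.le_def] at this
  simpa [hnorm] using this.1

lemma hnorm_zero (H : Matrix (Fin n) (Fin n) ℂ) : hnorm H 0 = 0 := by
  simp [hnorm]

lemma hnorm_smul_real (H : Matrix (Fin n) (Fin n) ℂ) (r : ℝ) (v : Fin n → ℂ) :
    hnorm H (r • v) = r ^ 2 * hnorm H v := by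
  simp [hnorm, Matrix.mulVec_smul, dotProduct_smul, smul_dotProduct, star_smul, smul_smul]
  ring

lemma hnorm_smul_complex (H : Matrix (Fin n) (Fin n) ℂ) (c : ℂ) (v : Fin n → ℂ) :
    hnorm H (c • v) = Complex.normSq c * hnorm H v := by
  simp [hnorm, Matrix.mulVec_smul, dotProduct_smul, smul_dotProduct, star_smul, smul_smul,
    Complex.mul_re, Complex.normSq_apply, mul_comm, Complex.mul_im]
  ring

lemma hnorm_add_le {H : Matrix (Fin n) (Fin n) ℂ} (hH : H.PosSemidef) (a b : Fin n → ℂ) :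
    hnorm H (a + b) ≤ 2 * hnorm H a + 2 * hnorm H b := by
  have key : hnorm H (a + b) + hnorm H (a - b) = 2 * hnorm H a + 2 * hnorm H b := by
    simp [hnorm, Matrix.mulVec_add, Matrix.mulVec_sub, add_dotProduct, sub_dotProduct,
      dotProduct_add, dotProduct_sub, star_add, star_sub]
    ring
  have := hnorm_nonneg hH (a - b)
  linarith

lemma cont_hnorm {H : ℂ → Matrix (Fin n) (Fin n) ℂ}
    (hH : ∀ i j : Fin n, Continuous fun z : ℂ => H z i j)
    {v : ℂ → Fin n → ℂ} (hv : Continuous v) :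
    Continuous fun z => hnorm (H z) (v z) := by
  simp only [hnorm, dotProduct, Matrix.mulVec, Pi.star_apply]
  apply Complex.continuous_re.comp
  apply continuous_finset_sum
  intro i _
  apply Continuous.mul
  · exact Complex.continuous_conj.comp ((continuous_apply i).comp hv)
  · apply continuous_finset_sum
    intro j _
    exact (hH i j).mul ((continuous_apply j).comp hv)

lemma dbar_smul (φ : ℂ → ℝ) (s : ℂ → Fin n → ℂ) (z : ℂ)
    (hφ : DifferentiableAt ℝ φ z) (hs : DifferentiableAt ℝ s z) :
    dbar (fun w => φ w • s w) z =
      φ z • dbar s z +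
        ((2 : ℝ)⁻¹ • (((fderiv ℝ φ z 1 : ℝ) : ℂ)
          + (fderiv ℝ φ z Complex.I : ℝ) * Complex.I)) • s z := by
  have hD : fderiv ℝ (fun w => φ w • s w) z
      = φ z • fderiv ℝ s z + (fderiv ℝ φ z).smulRight (s z) := by
    exact (hφ.hasFDerivAt.smul hs.hasFDerivAt).fderiv
  have e1 : fderiv ℝ (fun w => φ w • s w) z 1
      = fderiv ℝ φ z 1 • s z + φ z • fderiv ℝ s z 1 := by
    rw [hD]; simp; abel
  have e2 : fderiv ℝ (fun w => φ w • s w) z Complex.I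
      = fderiv ℝ φ z Complex.I • s z + φ z • fderiv ℝ s z Complex.I := by
    rw [hD]; simp; abel
  rw [dbar, e1, e2, dbar]
  ext i
  simp only [Pi.smul_apply, Pi.add_apply, smul_eq_mul, Complex.real_smul]
  push_cast
  ring

noncomputable def gfun (δ : ℝ) (z : ℂ) : ℝ := Real.sqrt (z.re ^ 2 + z.im ^ 2 + δ ^ 2)

noncomputable def phi (ε δ : ℝ) (z : ℂ) : ℝ := Real.exp (-(ε / 2) * gfun δ z)

lemma qpos (δ : ℝ) (hδ : 0 < δ) (z : ℂ) : 0 < z.re ^ 2 + z.im ^ 2 + δ ^ 2 := by positivity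

lemma gfun_pos {δ : ℝ} (hδ : 0 < δ) (z : ℂ) : 0 < gfun δ z :=
  Real.sqrt_pos.2 (qpos δ hδ z)

lemma gfun_sq {δ : ℝ} (hδ : 0 < δ) (z : ℂ) :
    gfun δ z ^ 2 = z.re ^ 2 + z.im ^ 2 + δ ^ 2 :=
  Real.sq_sqrt (qpos δ hδ z).le

lemma hasFDerivAt_q (δ : ℝ) (z : ℂ) :
    HasFDerivAt (fun w : ℂ => w.re ^ 2 + w.im ^ 2 + δ ^ 2)
      (((2 * z.re) • (Complex.reCLM : ℂ →L[ℝ] ℝ) + (2 * z.im) • (Complex.imCLM : ℂ →L[ℝ] ℝ))) z := by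
  have h1 : HasFDerivAt (fun w : ℂ => w.re) (Complex.reCLM : ℂ →L[ℝ] ℝ) z :=
    Complex.reCLM.hasFDerivAt
  have h2 : HasFDerivAt (fun w : ℂ => w.im) (Complex.imCLM : ℂ →L[ℝ] ℝ) z :=
    Complex.imCLM.hasFDerivAt
  have h : HasFDerivAt (fun w : ℂ => w.re * w.re + w.im * w.im + δ ^ 2) _ z :=
    ((h1.mul h1).add (h2.mul h2)).add_const (δ ^ 2)
  have heq : (fun w : ℂ => w.re * w.re + w.im * w.im + δ ^ 2)
      = (fun w : ℂ => w.re ^ 2 + w.im ^ 2 + δ ^ 2) := by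
    funext w; ring
  rw [heq] at h
  refine h.congr_fderiv ?_
  ext v
  simp only [ContinuousLinearMap.add_apply, ContinuousLinearMap.smul_apply,
    Complex.reCLM_apply, Complex.imCLM_apply, smul_eq_mul]
  ring

lemma contDiff_gfun {δ : ℝ} (hδ : 0 < δ) {N : WithTop ℕ∞} : ContDiff ℝ N (gfun δ) := by
  rw [contDiff_iff_contDiffAt]
  intro z
  have h : ContDiffAt ℝ N (fun w : ℂ => w.re ^ 2 + w.im ^ 2 + δ ^ 2) z :=
    ((((Complex.reCLM : ℂ →L[ℝ] ℝ).contDiff.pow 2).add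
      ((Complex.imCLM : ℂ →L[ℝ] ℝ).contDiff.pow 2)).add contDiff_const).contDiffAt
  exact h.sqrt (qpos δ hδ z).ne'

lemma contDiff_phi {ε δ : ℝ} (hδ : 0 < δ) {N : WithTop ℕ∞} : ContDiff ℝ N (phi ε δ) :=
  Real.contDiff_exp.comp (contDiff_const.mul (contDiff_gfun hδ))

lemma hasFDerivAt_phi {ε δ : ℝ} (hδ : 0 < δ) (z : ℂ) :
    HasFDerivAt (phi ε δ)
      ((phi ε δ z * (-(ε / 2)) * (1 / (2 * gfun δ z))) • ((2 * z.re) • (Complex.reCLM : ℂ →L[ℝ] ℝ)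
          + (2 * z.im) • (Complex.imCLM : ℂ →L[ℝ] ℝ))) z := by
  have hg : HasFDerivAt (gfun δ)
      ((1 / (2 * gfun δ z)) • ((2 * z.re) • (Complex.reCLM : ℂ →L[ℝ] ℝ)
          + (2 * z.im) • (Complex.imCLM : ℂ →L[ℝ] ℝ))) z :=
    (hasFDerivAt_q δ z).sqrt (qpos δ hδ z).ne'
  have h := (hg.const_mul (-(ε / 2))).exp
  have heq : Real.exp (-(ε / 2) * gfun δ z) •
        (-(ε / 2)) • (1 / (2 * gfun δ z)) • ((2 * z.re) • (Complex.reCLM : ℂ →L[ℝ] ℝ)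
          + (2 * z.im) • (Complex.imCLM : ℂ →L[ℝ] ℝ))
      = (phi ε δ z * (-(ε / 2)) * (1 / (2 * gfun δ z))) • ((2 * z.re) • (Complex.reCLM : ℂ →L[ℝ] ℝ)
          + (2 * z.im) • (Complex.imCLM : ℂ →L[ℝ] ℝ)) := by
    rw [smul_smul, smul_smul]
    congr 1
  rw [heq] at h
  exact h

lemma fderiv_phi_apply {ε δ : ℝ} (hδ : 0 < δ) (z : ℂ) (v : ℂ) :
    fderiv ℝ (phi ε δ) z v
      = phi ε δ z * (-(ε / 2)) * (1 / gfun δ z) * (z.re * v.re + z.im * v.im) := by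
  rw [(hasFDerivAt_phi hδ z).fderiv]
  simp
  have := (gfun_pos hδ z).ne'
  field_simp
  ring

lemma phi_pos (ε δ : ℝ) (z : ℂ) : 0 < phi ε δ z := Real.exp_pos _

lemma phi_sq (ε δ : ℝ) (z : ℂ) : phi ε δ z ^ 2 = Real.exp (-(ε * gfun δ z)) := by
  rw [phi, ← Real.exp_nat_mul]
  ring_nf

lemma abs_le_gfun {δ : ℝ} (hδ : 0 ≤ δ) (z : ℂ) : ‖z‖ ≤ gfun δ z := by
  rw [Complex.norm_def, Complex.normSq_apply, gfun]
  apply Real.sqrt_le_sqrt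
  nlinarith

lemma gfun_le {δ : ℝ} (hδ : 0 ≤ δ) (z : ℂ) : gfun δ z ≤ ‖z‖ + δ := by
  rw [gfun]
  have h2 : ‖z‖ ^ 2 = z.re ^ 2 + z.im ^ 2 := by
    rw [Complex.sq_norm, Complex.normSq_apply]; ring
  calc Real.sqrt (z.re ^ 2 + z.im ^ 2 + δ ^ 2) ≤ Real.sqrt ((‖z‖ + δ) ^ 2) :=
        Real.sqrt_le_sqrt (by nlinarith [norm_nonneg z])
    _ = ‖z‖ + δ := Real.sqrt_sq (by positivity)

/-- Gradient bound: `|∇φ|² ≤ (ε²/4) φ²`. -/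
lemma fderiv_phi_bound {ε δ : ℝ} (hδ : 0 < δ) (z : ℂ) :
    fderiv ℝ (phi ε δ) z 1 ^ 2 + fderiv ℝ (phi ε δ) z Complex.I ^ 2
      ≤ ε ^ 2 / 4 * phi ε δ z ^ 2 := by
  rw [fderiv_phi_apply hδ, fderiv_phi_apply hδ]
  simp only [Complex.one_re, Complex.one_im, Complex.I_re, Complex.I_im]
  have hg := gfun_pos hδ z
  have hg2 := gfun_sq hδ z
  have hφ := phi_pos ε δ z
  have hδ2 : 0 < δ ^ 2 := by positivity
  have key : (phi ε δ z * -(ε / 2) * (1 / gfun δ z) * (z.re * 1 + z.im * 0)) ^ 2 +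
      (phi ε δ z * -(ε / 2) * (1 / gfun δ z) * (z.re * 0 + z.im * 1)) ^ 2
      = ε ^ 2 / 4 * phi ε δ z ^ 2 * ((z.re ^ 2 + z.im ^ 2) / gfun δ z ^ 2) := by
    field_simp
    ring
  rw [key]
  have h1 : (z.re ^ 2 + z.im ^ 2) / gfun δ z ^ 2 ≤ 1 := by
    rw [div_le_one (by positivity), hg2]
    nlinarith
  calc ε ^ 2 / 4 * phi ε δ z ^ 2 * ((z.re ^ 2 + z.im ^ 2) / gfun δ z ^ 2)
      ≤ ε ^ 2 / 4 * phi ε δ z ^ 2 * 1 := by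
        apply mul_le_mul_of_nonneg_left h1 (by positivity)
    _ = ε ^ 2 / 4 * phi ε δ z ^ 2 := by ring

end Aux

section Main

variable {n : ℕ}

lemma cont_dbar {s : ℂ → Fin n → ℂ} (hs : ContDiff ℝ (⊤ : ℕ∞) s) :
    Continuous (dbar s) := by
  have hfd : Continuous (fderiv ℝ s) := hs.continuous_fderiv (by simp)
  exact continuous_const.smul ((hfd.clm_apply continuous_const).add
    ((hfd.clm_apply continuous_const).const_smul Complex.I))

lemma supp_dbar {s : ℂ → Fin n → ℂ} (hsc : HasCompactSupport s) :
    HasCompactSupport (dbar s) := by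
  apply (hsc.fderiv ℝ).mono
  intro z hz
  rw [Function.mem_support] at hz ⊢
  intro h0
  apply hz
  simp [dbar, h0]

/-- Pointwise bound on `hnorm` of `dbar` of the damped function. -/
lemma pointwise_bound {H : ℂ → Matrix (Fin n) (Fin n) ℂ} (hHpos : ∀ z, (H z).PosDef)
    {ε δ : ℝ} (hδ : 0 < δ) {s : ℂ → Fin n → ℂ} (hs : ContDiff ℝ (⊤ : ℕ∞) s) (z : ℂ) :
    hnorm (H z) (dbar (fun w => phi ε δ w • s w) z)
      ≤ 2 * (phi ε δ z ^ 2 * hnorm (H z) (dbar s z))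
        + ε ^ 2 / 8 * (phi ε δ z ^ 2 * hnorm (H z) (s z)) := by
  have hφd : DifferentiableAt ℝ (phi ε δ) z :=
    ((contDiff_phi (N := ⊤) hδ).differentiable (by simp)) z
  have hsd : DifferentiableAt ℝ s z := (hs.differentiable (by simp)) z
  rw [dbar_smul (phi ε δ) s z hφd hsd]
  set a1 : ℝ := fderiv ℝ (phi ε δ) z 1
  set a2 : ℝ := fderiv ℝ (phi ε δ) z Complex.I
  set c : ℂ := (2 : ℝ)⁻¹ • (((a1 : ℝ) : ℂ) + ((a2 : ℝ) : ℂ) * Complex.I)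
  have h1 := hnorm_add_le (hHpos z).posSemidef (phi ε δ z • dbar s z) (c • s z)
  rw [hnorm_smul_real, hnorm_smul_complex] at h1
  have hcre : c.re = 2⁻¹ * a1 := by simp [c]
  have hcim : c.im = 2⁻¹ * a2 := by simp [c]
  have hnc : Complex.normSq c = 4⁻¹ * (a1 ^ 2 + a2 ^ 2) := by
    rw [Complex.normSq_apply, hcre, hcim]; ring
  have hb := fderiv_phi_bound (ε := ε) hδ z
  have hsn := hnorm_nonneg (hHpos z).posSemidef (s z)
  have hmul := mul_le_mul_of_nonneg_right hb hsn
  have : 2 * (Complex.normSq c * hnorm (H z) (s z))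
      ≤ ε ^ 2 / 8 * (phi ε δ z ^ 2 * hnorm (H z) (s z)) := by
    rw [hnc]
    nlinarith [hmul]
  linarith

/-- If the unweighted eigenvalue inequality holds for the `∂̄`-operator, then for every
`0 < ε < 2√κ₀` the weighted eigenvalue inequality holds with constant `κ₀/4` and weight
`e^{-ε|z|}`. -/
theorem eigenvalue_condition_weighted (n : ℕ) (hn : 1 ≤ n)
    (H : ℂ → Matrix (Fin n) (Fin n) ℂ)
    (hHsmooth : ∀ i j : Fin n, ContDiff ℝ (⊤ : ℕ∞) fun z : ℂ => H z i j)
    (hHpos : ∀ z, (H z).PosDef)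
    (κ₀ : ℝ) (hκ₀ : 0 < κ₀)
    (heig : ∀ s : ℂ → Fin n → ℂ, ContDiff ℝ (⊤ : ℕ∞) s → HasCompactSupport s →
        κ₀ * ∫ z : ℂ, hnorm (H z) (s z) ≤ ∫ z : ℂ, hnorm (H z) (dbar s z))
    (ε : ℝ) (hε : 0 < ε) (hε' : ε < 2 * Real.sqrt κ₀)
    (s : ℂ → Fin n → ℂ) (hs : ContDiff ℝ (⊤ : ℕ∞) s) (hsc : HasCompactSupport s) :
    κ₀ / 4 * ∫ z : ℂ, hnorm (H z) (s z) * Real.exp (-(ε * ‖z‖)) ≤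
      ∫ z : ℂ, hnorm (H z) (dbar s z) * Real.exp (-(ε * ‖z‖)) := by
  -- choice of δ
  have hk2 : ε ^ 2 / 8 < κ₀ / 2 := by
    nlinarith [Real.sq_sqrt hκ₀.le, Real.sqrt_nonneg κ₀]
  set K : ℝ := κ₀ - ε ^ 2 / 8 with hK
  have hKpos : 0 < K := by simp only [hK]; linarith
  set r : ℝ := κ₀ / (2 * K) with hr
  have hr0 : 0 < r := by positivity
  have hr1 : r < 1 := by
    rw [hr, div_lt_one (by positivity)]
    simp only [hK]; linarith
  set δ : ℝ := Real.log r⁻¹ / ε with hδdef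
  have hrinv : 1 < r⁻¹ := (one_lt_inv₀ hr0).2 hr1
  have hδ : 0 < δ := div_pos (Real.log_pos hrinv) hε
  have hexp : Real.exp (-(ε * δ)) = r := by
    rw [hδdef]
    have : -(ε * (Real.log r⁻¹ / ε)) = Real.log r := by
      rw [Real.log_inv]
      field_simp
    rw [this, Real.exp_log hr0]
  -- the damped test function
  set t : ℂ → Fin n → ℂ := fun z => phi ε δ z • s z with ht
  have htCD : ContDiff ℝ (⊤ : ℕ∞) t := (contDiff_phi hδ).smul hs
  have htc : HasCompactSupport t := by
    apply hsc.mono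
    intro z hz
    rw [Function.mem_support] at hz ⊢
    intro h0
    apply hz
    rw [ht]; simp [h0]
  -- continuity facts
  have hHc : ∀ i j : Fin n, Continuous fun z : ℂ => H z i j := fun i j => (hHsmooth i j).continuous
  have hsC : Continuous s := hs.continuous
  have hφC : Continuous (phi ε δ) := (contDiff_phi (N := ⊤) hδ).continuous
  have hwC : Continuous fun z : ℂ => Real.exp (-(ε * ‖z‖)) :=
    Real.continuous_exp.comp (continuous_const.mul continuous_norm).neg
  have hdbarC : Continuous (dbar s) := cont_dbar hs
  have hdbarsupp : HasCompactSupport (dbar s) := supp_dbar hsc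
  have hdbartC : Continuous (dbar t) := cont_dbar htCD
  have hdbartsupp : HasCompactSupport (dbar t) := supp_dbar htc
  -- nonnegativity facts
  have hsn : ∀ z, 0 ≤ hnorm (H z) (s z) := fun z => hnorm_nonneg (hHpos z).posSemidef _
  have hdn : ∀ z, 0 ≤ hnorm (H z) (dbar s z) := fun z => hnorm_nonneg (hHpos z).posSemidef _
  -- integrability facts
  have hI1 : Integrable (fun z : ℂ => hnorm (H z) (s z) * Real.exp (-(ε * ‖z‖))) := by
    apply Continuous.integrable_of_hasCompactSupport ((cont_hnorm hHc hsC).mul hwC)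
    apply hsc.mono
    intro z hz
    rw [Function.mem_support] at hz ⊢
    intro h0; apply hz; simp [h0, hnorm_zero]
  have hI2 : Integrable (fun z : ℂ => hnorm (H z) (dbar s z) * Real.exp (-(ε * ‖z‖))) := by
    apply Continuous.integrable_of_hasCompactSupport ((cont_hnorm hHc hdbarC).mul hwC)
    apply hdbarsupp.mono
    intro z hz
    rw [Function.mem_support] at hz ⊢
    intro h0; apply hz; simp [h0, hnorm_zero]
  have hI3 : Integrable (fun z : ℂ => phi ε δ z ^ 2 * hnorm (H z) (s z)) := by
    apply Continuous.integrable_of_hasCompactSupport ((hφC.pow 2).mul (cont_hnorm hHc hsC))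
    apply hsc.mono
    intro z hz
    rw [Function.mem_support] at hz ⊢
    intro h0; apply hz; simp [h0, hnorm_zero]
  have hI4 : Integrable (fun z : ℂ => phi ε δ z ^ 2 * hnorm (H z) (dbar s z)) := by
    apply Continuous.integrable_of_hasCompactSupport ((hφC.pow 2).mul (cont_hnorm hHc hdbarC))
    apply hdbarsupp.mono
    intro z hz
    rw [Function.mem_support] at hz ⊢
    intro h0; apply hz; simp [h0, hnorm_zero]
  have hI6 : Integrable (fun z : ℂ => hnorm (H z) (dbar t z)) := by
    apply Continuous.integrable_of_hasCompactSupport (cont_hnorm hHc hdbartC)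
    apply hdbartsupp.mono
    intro z hz
    rw [Function.mem_support] at hz ⊢
    intro h0; apply hz; simp [h0, hnorm_zero]
  -- apply the unweighted inequality to `t`
  have step1 := heig t htCD htc
  have e5 : (∫ z : ℂ, hnorm (H z) (t z))
      = ∫ z : ℂ, phi ε δ z ^ 2 * hnorm (H z) (s z) := by
    congr 1
    funext z
    rw [ht]
    exact hnorm_smul_real _ _ _
  rw [e5] at step1
  -- bound the dbar term
  have step2 : (∫ z : ℂ, hnorm (H z) (dbar t z))
      ≤ ∫ z : ℂ, (2 * (phi ε δ z ^ 2 * hnorm (H z) (dbar s z))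
          + ε ^ 2 / 8 * (phi ε δ z ^ 2 * hnorm (H z) (s z))) := by
    apply integral_mono hI6 ((hI4.const_mul 2).add (hI3.const_mul (ε ^ 2 / 8)))
    intro z
    exact pointwise_bound hHpos hδ hs z
  rw [integral_add (hI4.const_mul 2) (hI3.const_mul (ε ^ 2 / 8)),
    integral_const_mul, integral_const_mul] at step2
  -- combine
  have step3 : K * ∫ z : ℂ, phi ε δ z ^ 2 * hnorm (H z) (s z)
      ≤ 2 * ∫ z : ℂ, phi ε δ z ^ 2 * hnorm (H z) (dbar s z) := by
    simp only [hK]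
    nlinarith [le_trans step1 step2]
  -- compare weights
  have cmp1 : (∫ z : ℂ, phi ε δ z ^ 2 * hnorm (H z) (dbar s z))
      ≤ ∫ z : ℂ, hnorm (H z) (dbar s z) * Real.exp (-(ε * ‖z‖)) := by
    apply integral_mono hI4 hI2
    intro z
    have h1 : phi ε δ z ^ 2 ≤ Real.exp (-(ε * ‖z‖)) := by
      rw [phi_sq]
      apply Real.exp_le_exp.2
      have := abs_le_gfun hδ.le z
      nlinarith
    calc phi ε δ z ^ 2 * hnorm (H z) (dbar s z)
        ≤ Real.exp (-(ε * ‖z‖)) * hnorm (H z) (dbar s z) :=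
          mul_le_mul_of_nonneg_right h1 (hdn z)
      _ = hnorm (H z) (dbar s z) * Real.exp (-(ε * ‖z‖)) := mul_comm _ _
  have cmp2 : r * (∫ z : ℂ, hnorm (H z) (s z) * Real.exp (-(ε * ‖z‖)))
      ≤ ∫ z : ℂ, phi ε δ z ^ 2 * hnorm (H z) (s z) := by
    rw [← integral_const_mul]
    apply integral_mono (hI1.const_mul r) hI3
    intro z
    have h1 : r * Real.exp (-(ε * ‖z‖)) ≤ phi ε δ z ^ 2 := by
      rw [phi_sq, ← hexp, ← Real.exp_add]
      apply Real.exp_le_exp.2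
      have := gfun_le hδ.le z
      nlinarith
    calc r * (hnorm (H z) (s z) * Real.exp (-(ε * ‖z‖)))
        = (r * Real.exp (-(ε * ‖z‖))) * hnorm (H z) (s z) := by ring
      _ ≤ phi ε δ z ^ 2 * hnorm (H z) (s z) := mul_le_mul_of_nonneg_right h1 (hsn z)
  have hA : 0 ≤ ∫ z : ℂ, hnorm (H z) (s z) * Real.exp (-(ε * ‖z‖)) :=
    integral_nonneg fun z => mul_nonneg (hsn z) (Real.exp_pos _).le
  have hKr : K * r = κ₀ / 2 := by
    rw [hr]
    field_simp
  have final : K * (r * ∫ z : ℂ, hnorm (H z) (s z) * Real.exp (-(ε * ‖z‖)))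
      ≤ 2 * ∫ z : ℂ, hnorm (H z) (dbar s z) * Real.exp (-(ε * ‖z‖)) := by
    calc K * (r * ∫ z : ℂ, hnorm (H z) (s z) * Real.exp (-(ε * ‖z‖)))
        ≤ K * ∫ z : ℂ, phi ε δ z ^ 2 * hnorm (H z) (s z) :=
          mul_le_mul_of_nonneg_left cmp2 hKpos.le
      _ ≤ 2 * ∫ z : ℂ, phi ε δ z ^ 2 * hnorm (H z) (dbar s z) := step3
      _ ≤ 2 * ∫ z : ℂ, hnorm (H z) (dbar s z) * Real.exp (-(ε * ‖z‖)) := by linarith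
  rw [← mul_assoc, hKr] at final
  linarith

end Main
end

section
/- Let ψ : ℂ → ℝ be smooth and ε > 0, and write W(z) = e^{-ψ(z) - 2ε|z|} and ∇_z f = ∂f − (∂ψ)·f. Then for all smooth compactly supported functions σ, t : ℂ → ℂ one has the integration-by-parts identity ∫_ℂ σ(z) · conj(∂̄t(z)) · W(z) dA = ∫_ℂ (−∇_zσ(z) + ε·(conj(z)/|z|)·σ(z)) · conj(t(z)) · W(z) dA, where conj(z)/|z| is interpreted as 0 at z = 0. -/
open Complex MeasureTheory Filter Topology Set

private lemma integrable_of_bdd_compact {X : Type*} [MeasurableSpace X] [TopologicalSpace X]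
    [OpensMeasurableSpace X] [T2Space X] {μ : Measure X} [IsFiniteMeasureOnCompacts μ]
    {f : X → ℂ} (hf : AEStronglyMeasurable f μ) {K : Set X} (hK : IsCompact K)
    (hsupp : ∀ x, x ∉ K → f x = 0) {C : ℝ} (hC : ∀ᵐ x ∂μ, ‖f x‖ ≤ C) : Integrable f μ := by
  have hfi : f = K.indicator f := by
    ext x
    by_cases h : x ∈ K
    · simp [h]
    · simp [h, hsupp x h]
  rw [hfi, integrable_indicator_iff hK.isClosed.measurableSet]
  exact Measure.integrableOn_of_bounded hK.measure_lt_top.ne hf (ae_restrict_of_ae hC)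

private lemma integral_deriv_eq_zero' (u u' : ℝ → ℂ) (hu : ∀ x, HasDerivAt u (u' x) x)
    (hui : Integrable u) (hu'i : Integrable u') : ∫ x, u' x = 0 := by
  have h := MeasureTheory.integral_bilinear_hasDerivAt_right_eq_neg_left_of_integrable
    (L := ContinuousLinearMap.mul ℝ ℂ) (u := fun _ => (1 : ℂ)) (u' := fun _ => (0 : ℂ))
    (v := u) (v' := u') (fun x _ => hasDerivAt_const x (1 : ℂ)) (fun x _ => hu x)
    (by simpa using hu'i) (by simpa using integrable_zero ℝ ℂ volume) (by simpa using hui)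
  simpa using h

private lemma fderiv_vanish {G : ℂ → ℂ} (hGs : HasCompactSupport G) {z : ℂ}
    (hz : z ∉ tsupport (fderiv ℝ G)) : fderiv ℝ G z = 0 :=
  image_eq_zero_of_notMem_tsupport hz

private lemma integrable_fderiv_apply {G : ℂ → ℂ} (hGs : HasCompactSupport G)
    {C : ℝ} (hC : ∀ z : ℂ, z ≠ 0 → ‖fderiv ℝ G z‖ ≤ C) (v : ℂ) :
    Integrable (fun z => fderiv ℝ G z v) := by
  have hmeas : AEStronglyMeasurable (fun z => fderiv ℝ G z v) volume :=
    (measurable_fderiv_apply_const ℝ G v).aestronglyMeasurable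
  apply integrable_of_bdd_compact (K := tsupport (fderiv ℝ G)) hmeas (hGs.fderiv (𝕜 := ℝ))
    (fun z hz => by rw [fderiv_vanish hGs hz, ContinuousLinearMap.zero_apply])
    (C := C * ‖v‖)
  have h0 : volume ({0} : Set ℂ) = 0 := measure_singleton 0
  rw [ae_iff]
  apply measure_mono_null _ h0
  intro z hz
  simp only [Set.mem_setOf_eq, not_le] at hz
  by_contra h
  simp only [Set.mem_singleton_iff] at h
  have := (fderiv ℝ G z).le_opNorm v
  have hb := mul_le_mul_of_nonneg_right (hC z h) (norm_nonneg v)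
  linarith

private lemma key_I (G : ℂ → ℂ) (hGc : Continuous G) (hGs : HasCompactSupport G)
    (hd : ∀ z : ℂ, z ≠ 0 → DifferentiableAt ℝ G z)
    {C : ℝ} (hC : ∀ z : ℂ, z ≠ 0 → ‖fderiv ℝ G z‖ ≤ C) :
    ∫ z : ℂ, fderiv ℝ G z Complex.I = 0 := by
  obtain ⟨R, hR⟩ : ∃ R, tsupport G ⊆ Metric.closedBall 0 R :=
    hGs.isBounded.subset_closedBall 0
  obtain ⟨R', hR'⟩ : ∃ R', tsupport (fderiv ℝ G) ⊆ Metric.closedBall 0 R' :=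
    (hGs.fderiv (𝕜 := ℝ)).isBounded.subset_closedBall 0
  have hint : Integrable (fun z => fderiv ℝ G z Complex.I) := integrable_fderiv_apply hGs hC _
  set F : ℝ × ℝ → ℂ := fun p => fderiv ℝ G ((p.1 : ℂ) + (p.2 : ℂ) * Complex.I) Complex.I with hF
  have hsymm : ∀ p : ℝ × ℝ, (Complex.measurableEquivRealProd.symm p) =
      (p.1 : ℂ) + (p.2 : ℂ) * Complex.I := by
    intro p
    rw [Complex.measurableEquivRealProd_symm_apply, Complex.mk_eq_add_mul_I]
  have e1 : ∫ z : ℂ, fderiv ℝ G z Complex.I = ∫ p : ℝ × ℝ, F p := by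
    rw [← (Complex.volume_preserving_equiv_real_prod.symm).integral_comp
      Complex.measurableEquivRealProd.symm.measurableEmbedding
      (fun z => fderiv ℝ G z Complex.I)]
    congr 1
    ext p
    rw [hsymm p]
  have hint2 : Integrable F (volume.prod volume) := by
    have := ((Complex.volume_preserving_equiv_real_prod.symm).integrable_comp_emb
      Complex.measurableEquivRealProd.symm.measurableEmbedding).2 hint
    rw [← Measure.volume_eq_prod]
    apply this.congr
    filter_upwards with p
    simp only [Function.comp_apply, hsymm p, hF]
  rw [e1, Measure.volume_eq_prod (α := ℝ) (β := ℝ),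
    integral_prod F hint2]
  have hae : ∀ᵐ x : ℝ, (∫ y : ℝ, F (x, y)) = 0 := by
    rw [ae_iff]
    apply measure_mono_null _ (measure_singleton (0 : ℝ))
    intro x hx
    simp only [Set.mem_setOf_eq, Set.mem_singleton_iff] at hx ⊢
    by_contra hx0
    apply hx
    -- now x ≠ 0
    have hz : ∀ y : ℝ, ((x : ℂ) + (y : ℂ) * Complex.I) ≠ 0 := by
      intro y h
      apply hx0
      simpa using congrArg Complex.re h
    set u : ℝ → ℂ := fun y => G ((x : ℂ) + (y : ℂ) * Complex.I) with hu
    set u' : ℝ → ℂ := fun y => fderiv ℝ G ((x : ℂ) + (y : ℂ) * Complex.I) Complex.I with hu'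
    have hcont : Continuous fun y : ℝ => (x : ℂ) + (y : ℂ) * Complex.I := by continuity
    have hud : ∀ y, HasDerivAt u (u' y) y := by
      intro y
      have hline : HasDerivAt (fun y : ℝ => (x : ℂ) + (y : ℂ) * Complex.I) Complex.I y := by
        simpa using (Complex.ofRealCLM.hasDerivAt.mul_const Complex.I).const_add (x : ℂ)
      exact (hd _ (hz y)).hasFDerivAt.comp_hasDerivAt y hline
    have habs : ∀ y : ℝ, |y| ≤ ‖(x : ℂ) + (y : ℂ) * Complex.I‖ := by
      intro y
      have := Complex.abs_im_le_norm ((x : ℂ) + (y : ℂ) * Complex.I)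
      simpa using this
    have hui : Integrable u := by
      apply Continuous.integrable_of_hasCompactSupport (hGc.comp hcont)
      apply HasCompactSupport.intro (isCompact_Icc (a := -R) (b := R))
      intro y hy
      refine image_eq_zero_of_notMem_tsupport (f := G) ?_
      intro hmem
      apply hy
      have h1 := hR hmem
      rw [Metric.mem_closedBall, Complex.dist_eq, sub_zero] at h1
      have := (habs y).trans h1
      rw [Set.mem_Icc]
      exact abs_le.1 this
    have hu'i : Integrable u' := by
      have hmeas : AEStronglyMeasurable u' volume :=
        ((measurable_fderiv_apply_const ℝ G Complex.I).comp hcont.measurable).aestronglyMeasurable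
      apply integrable_of_bdd_compact (K := Set.Icc (-R') R') hmeas isCompact_Icc
        (C := C)
      · intro y hy
        have hnm : ((x : ℂ) + (y : ℂ) * Complex.I) ∉ tsupport (fderiv ℝ G) := by
          intro hmem
          apply hy
          have h1 := hR' hmem
          rw [Metric.mem_closedBall, Complex.dist_eq, sub_zero] at h1
          exact Set.mem_Icc.2 (abs_le.1 ((habs y).trans h1))
        rw [hu']
        simp only
        rw [fderiv_vanish hGs hnm, ContinuousLinearMap.zero_apply]
      · filter_upwards with y
        calc ‖u' y‖ ≤ ‖fderiv ℝ G ((x : ℂ) + (y : ℂ) * Complex.I)‖ * ‖Complex.I‖ :=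
              (fderiv ℝ G _).le_opNorm _
        _ ≤ C := by
              rw [Complex.norm_I, mul_one]
              exact hC _ (hz y)
    exact integral_deriv_eq_zero' u u' hud hui hu'i
  rw [integral_congr_ae hae, integral_zero]

private lemma key_one (G : ℂ → ℂ) (hGc : Continuous G) (hGs : HasCompactSupport G)
    (hd : ∀ z : ℂ, z ≠ 0 → DifferentiableAt ℝ G z)
    {C : ℝ} (hC : ∀ z : ℂ, z ≠ 0 → ‖fderiv ℝ G z‖ ≤ C) :
    ∫ z : ℂ, fderiv ℝ G z 1 = 0 := by
  obtain ⟨R, hR⟩ : ∃ R, tsupport G ⊆ Metric.closedBall 0 R :=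
    hGs.isBounded.subset_closedBall 0
  obtain ⟨R', hR'⟩ : ∃ R', tsupport (fderiv ℝ G) ⊆ Metric.closedBall 0 R' :=
    (hGs.fderiv (𝕜 := ℝ)).isBounded.subset_closedBall 0
  have hint : Integrable (fun z => fderiv ℝ G z 1) := integrable_fderiv_apply hGs hC _
  set F : ℝ × ℝ → ℂ := fun p => fderiv ℝ G ((p.1 : ℂ) + (p.2 : ℂ) * Complex.I) 1 with hF
  have hsymm : ∀ p : ℝ × ℝ, (Complex.measurableEquivRealProd.symm p) =
      (p.1 : ℂ) + (p.2 : ℂ) * Complex.I := by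
    intro p
    rw [Complex.measurableEquivRealProd_symm_apply, Complex.mk_eq_add_mul_I]
  have e1 : ∫ z : ℂ, fderiv ℝ G z 1 = ∫ p : ℝ × ℝ, F p := by
    rw [← (Complex.volume_preserving_equiv_real_prod.symm).integral_comp
      Complex.measurableEquivRealProd.symm.measurableEmbedding
      (fun z => fderiv ℝ G z 1)]
    congr 1
    ext p
    rw [hsymm p]
  have hint2 : Integrable F (volume.prod volume) := by
    have := ((Complex.volume_preserving_equiv_real_prod.symm).integrable_comp_emb
      Complex.measurableEquivRealProd.symm.measurableEmbedding).2 hint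
    rw [← Measure.volume_eq_prod]
    apply this.congr
    filter_upwards with p
    simp only [Function.comp_apply, hsymm p, hF]
  rw [e1, Measure.volume_eq_prod (α := ℝ) (β := ℝ), integral_prod_symm F hint2]
  have hae : ∀ᵐ y : ℝ, (∫ x : ℝ, F (x, y)) = 0 := by
    rw [ae_iff]
    apply measure_mono_null _ (measure_singleton (0 : ℝ))
    intro y hy
    simp only [Set.mem_setOf_eq, Set.mem_singleton_iff] at hy ⊢
    by_contra hy0
    apply hy
    have hz : ∀ x : ℝ, ((x : ℂ) + (y : ℂ) * Complex.I) ≠ 0 := by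
      intro x h
      apply hy0
      simpa using congrArg Complex.im h
    set u : ℝ → ℂ := fun x => G ((x : ℂ) + (y : ℂ) * Complex.I) with hu
    set u' : ℝ → ℂ := fun x => fderiv ℝ G ((x : ℂ) + (y : ℂ) * Complex.I) 1 with hu'
    have hcont : Continuous fun x : ℝ => (x : ℂ) + (y : ℂ) * Complex.I := by continuity
    have hud : ∀ x, HasDerivAt u (u' x) x := by
      intro x
      have hline : HasDerivAt (fun x : ℝ => (x : ℂ) + (y : ℂ) * Complex.I) 1 x := by
        simpa using Complex.ofRealCLM.hasDerivAt.add_const ((y : ℂ) * Complex.I)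
      exact (hd _ (hz x)).hasFDerivAt.comp_hasDerivAt x hline
    have habs : ∀ x : ℝ, |x| ≤ ‖(x : ℂ) + (y : ℂ) * Complex.I‖ := by
      intro x
      have := Complex.abs_re_le_norm ((x : ℂ) + (y : ℂ) * Complex.I)
      simpa using this
    have hui : Integrable u := by
      apply Continuous.integrable_of_hasCompactSupport (hGc.comp hcont)
      apply HasCompactSupport.intro (isCompact_Icc (a := -R) (b := R))
      intro x hx
      refine image_eq_zero_of_notMem_tsupport (f := G) ?_
      intro hmem
      apply hx
      have h1 := hR hmem
      rw [Metric.mem_closedBall, Complex.dist_eq, sub_zero] at h1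
      have := (habs x).trans h1
      rw [Set.mem_Icc]
      exact abs_le.1 this
    have hu'i : Integrable u' := by
      have hmeas : AEStronglyMeasurable u' volume :=
        ((measurable_fderiv_apply_const ℝ G 1).comp hcont.measurable).aestronglyMeasurable
      apply integrable_of_bdd_compact (K := Set.Icc (-R') R') hmeas isCompact_Icc
        (C := C)
      · intro x hx
        have hnm : ((x : ℂ) + (y : ℂ) * Complex.I) ∉ tsupport (fderiv ℝ G) := by
          intro hmem
          apply hx
          have h1 := hR' hmem
          rw [Metric.mem_closedBall, Complex.dist_eq, sub_zero] at h1
          exact Set.mem_Icc.2 (abs_le.1 ((habs x).trans h1))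
        rw [hu']
        simp only
        rw [fderiv_vanish hGs hnm, ContinuousLinearMap.zero_apply]
      · filter_upwards with x
        calc ‖u' x‖ ≤ ‖fderiv ℝ G ((x : ℂ) + (y : ℂ) * Complex.I)‖ * ‖(1 : ℂ)‖ :=
              (fderiv ℝ G _).le_opNorm _
        _ ≤ C := by
              rw [norm_one, mul_one]
              exact hC _ (hz x)
    exact integral_deriv_eq_zero' u u' hud hui hu'i
  rw [integral_congr_ae hae, integral_zero]

private lemma hasFDerivAt_cabs {z : ℂ} (hz : z ≠ 0) :
    HasFDerivAt (fun w : ℂ => ‖w‖)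
      ((‖z‖)⁻¹ • (z.re • Complex.reCLM + z.im • Complex.imCLM)) z := by
  have hre : HasFDerivAt (fun w : ℂ => w.re) Complex.reCLM z := Complex.reCLM.hasFDerivAt
  have him : HasFDerivAt (fun w : ℂ => w.im) Complex.imCLM z := Complex.imCLM.hasFDerivAt
  have hq := (hre.mul hre).add (him.mul him)
  have h0 : z.re * z.re + z.im * z.im ≠ 0 := by
    have := Complex.normSq_pos.2 hz
    rw [Complex.normSq_apply] at this
    exact ne_of_gt this
  have hs := (Real.hasDerivAt_sqrt h0).comp_hasFDerivAt z hq
  have habs : (fun w : ℂ => ‖w‖) = fun w : ℂ => Real.sqrt (w.re * w.re + w.im * w.im) := by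
    funext w
    rw [Complex.norm_def, Complex.normSq_apply]
  have hsq : Real.sqrt (z.re * z.re + z.im * z.im) = ‖z‖ := by
    rw [Complex.norm_def, Complex.normSq_apply]
  rw [habs]
  refine hs.congr_fderiv ?_
  ext w
  have hm : ‖z‖ ≠ 0 := norm_ne_zero_iff.mpr hz
  simp only [ContinuousLinearMap.smul_apply, ContinuousLinearMap.add_apply,
    ContinuousLinearMap.coe_smul', Pi.smul_apply, Complex.reCLM_apply, Complex.imCLM_apply,
    hsq, smul_eq_mul]
  field_simp
  ring

/-- The Wirtinger operator `∂f(z) = (1/2)(fderiv ℝ f z 1 − i • fderiv ℝ f z i)`. -/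
noncomputable def del {V : Type*} [NormedAddCommGroup V] [NormedSpace ℂ V]
    (f : ℂ → V) (z : ℂ) : V :=
  (2 : ℝ)⁻¹ • (fderiv ℝ f z 1 - Complex.I • fderiv ℝ f z Complex.I)

/-- The Chern connection `(1,0)`-derivative `∇_z f = ∂f − (∂ψ)·f` for the metric `e^{-ψ}`. -/
noncomputable def nablaZ (ψ : ℂ → ℝ) (f : ℂ → ℂ) (z : ℂ) : ℂ :=
  del f z - del (fun w => (ψ w : ℂ)) z * f z

/-- The weight `W(z) = e^{-ψ(z) - 2ε|z|}`. -/
noncomputable def Wt (ψ : ℂ → ℝ) (ε : ℝ) (z : ℂ) : ℝ :=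
  Real.exp (-ψ z - 2 * ε * ‖z‖)

private noncomputable def dabsCLM (z : ℂ) : ℂ →L[ℝ] ℝ :=
  (‖z‖)⁻¹ • (z.re • Complex.reCLM + z.im • Complex.imCLM)

private lemma norm_dabsCLM_le (z : ℂ) : ‖dabsCLM z‖ ≤ 1 := by
  apply ContinuousLinearMap.opNorm_le_bound _ zero_le_one
  intro w
  simp only [dabsCLM, ContinuousLinearMap.smul_apply, ContinuousLinearMap.add_apply,
    ContinuousLinearMap.coe_smul', Pi.smul_apply, Complex.reCLM_apply, Complex.imCLM_apply,
    smul_eq_mul]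
  have h1 : z.re * w.re + z.im * w.im = ((starRingEnd ℂ) z * w).re := by
    simp [Complex.mul_re]
  have h2 : |((starRingEnd ℂ) z * w).re| ≤ ‖z‖ * ‖w‖ := by
    calc |((starRingEnd ℂ) z * w).re| ≤ ‖(starRingEnd ℂ) z * w‖ :=
          Complex.abs_re_le_norm _
    _ = ‖z‖ * ‖w‖ := by rw [norm_mul, Complex.norm_conj]
  rw [Real.norm_eq_abs, abs_mul, abs_inv, _root_.abs_of_nonneg (norm_nonneg z), h1]
  rcases eq_or_ne z 0 with rfl | hz
  · simp
  · have hpos : 0 < ‖z‖ := norm_pos_iff.mpr hz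
    rw [one_mul]
    calc (‖z‖)⁻¹ * |((starRingEnd ℂ) z * w).re|
        ≤ (‖z‖)⁻¹ * (‖z‖ * ‖w‖) := by
          apply mul_le_mul_of_nonneg_left h2 (by positivity)
    _ = ‖w‖ := by field_simp
    _ = ‖w‖ := rfl

private noncomputable def DW (ψ : ℂ → ℝ) (ε : ℝ) (z : ℂ) : ℂ →L[ℝ] ℂ :=
  Complex.ofRealCLM.comp (Wt ψ ε z • (-fderiv ℝ ψ z - (2 * ε) • dabsCLM z))

private lemma DW_def (ψ : ℂ → ℝ) (ε : ℝ) (z : ℂ) :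
    DW ψ ε z = Complex.ofRealCLM.comp (Wt ψ ε z • (-fderiv ℝ ψ z - (2 * ε) • dabsCLM z)) := rfl

private lemma hasFDerivAt_Wc (ψ : ℂ → ℝ) (hψ : ContDiff ℝ (⊤ : ℕ∞) ψ) (ε : ℝ) {z : ℂ}
    (hz : z ≠ 0) : HasFDerivAt (fun w => ((Wt ψ ε w : ℝ) : ℂ)) (DW ψ ε z) z := by
  have hψz : HasFDerivAt ψ (fderiv ℝ ψ z) z :=
    (hψ.differentiable (by simp) z).hasFDerivAt
  have habs : HasFDerivAt (fun w : ℂ => ‖w‖) (dabsCLM z) z := hasFDerivAt_cabs hz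
  have hu : HasFDerivAt (fun w => -ψ w - 2 * ε * ‖w‖)
      (-fderiv ℝ ψ z - (2 * ε) • dabsCLM z) z :=
    hψz.neg.sub (habs.const_mul (2 * ε))
  have hexp : HasFDerivAt (fun w => Wt ψ ε w)
      (Wt ψ ε z • (-fderiv ℝ ψ z - (2 * ε) • dabsCLM z)) z :=
    (Real.hasDerivAt_exp _).comp_hasFDerivAt z hu
  exact Complex.ofRealCLM.hasFDerivAt.comp z hexp

set_option maxHeartbeats 2000000 in
/-- Integration by parts: the formal adjoint of `∂̄` with respect to the weight
`W = e^{-ψ - 2ε|z|}` is `σ ↦ -∇_z σ + ε (z̄/|z|) σ`. -/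
theorem adjoint_formula (ψ : ℂ → ℝ) (hψ : ContDiff ℝ (⊤ : ℕ∞) ψ) (ε : ℝ) (hε : 0 < ε)
    (σ t : ℂ → ℂ) (hσ : ContDiff ℝ (⊤ : ℕ∞) σ) (hσc : HasCompactSupport σ)
    (ht : ContDiff ℝ (⊤ : ℕ∞) t) (htc : HasCompactSupport t) :
    ∫ z : ℂ, σ z * (starRingEnd ℂ) (dbar t z) * (Wt ψ ε z : ℂ) =
      ∫ z : ℂ, (-(nablaZ ψ σ z) + (ε : ℂ) * ((starRingEnd ℂ) z / ((‖z‖ : ℝ) : ℂ)) * σ z) *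
        (starRingEnd ℂ) (t z) * (Wt ψ ε z : ℂ) := by
  have h1top : (1 : ℕ∞) ≤ (⊤ : ℕ∞) := le_top
  set CJ : ℂ →L[ℝ] ℂ := Complex.conjCLE.toContinuousLinearMap with hCJ
  have hCJapp : ∀ w : ℂ, CJ w = (starRingEnd ℂ) w := fun w => rfl
  set Wc : ℂ → ℂ := fun w => ((Wt ψ ε w : ℝ) : ℂ) with hWc
  set G : ℂ → ℂ := fun w => σ w * (starRingEnd ℂ) (t w) * Wc w with hG
  have hψz : ∀ z : ℂ, HasFDerivAt ψ (fderiv ℝ ψ z) z :=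
    fun z => (hψ.differentiable (by simp) z).hasFDerivAt
  have hσz : ∀ z : ℂ, HasFDerivAt σ (fderiv ℝ σ z) z :=
    fun z => (hσ.differentiable (by simp) z).hasFDerivAt
  have htz : ∀ z : ℂ, HasFDerivAt t (fderiv ℝ t z) z :=
    fun z => (ht.differentiable (by simp) z).hasFDerivAt
  have hconjfun : (fun w => (starRingEnd ℂ) (t w)) = ⇑CJ ∘ t := rfl
  have hconj' : ∀ z : ℂ, HasFDerivAt (fun w => (starRingEnd ℂ) (t w))
      (CJ.comp (fderiv ℝ t z)) z := by
    intro z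
    rw [hconjfun]
    exact CJ.hasFDerivAt.comp z (htz z)
  set DG : ℂ → (ℂ →L[ℝ] ℂ) := fun z =>
    (σ z * (starRingEnd ℂ) (t z)) • DW ψ ε z +
      Wc z • ((σ z) • (CJ.comp (fderiv ℝ t z)) + ((starRingEnd ℂ) (t z)) • fderiv ℝ σ z)
    with hDGdef
  have hDG : ∀ z : ℂ, z ≠ 0 → HasFDerivAt G (DG z) z := by
    intro z hz
    exact ((hσz z).mul (hconj' z)).mul (hasFDerivAt_Wc ψ hψ ε hz)
  have hWtc : Continuous fun w => Wt ψ ε w := by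
    apply Real.continuous_exp.comp
    exact ((hψ.continuous).neg.sub ((continuous_const.mul continuous_norm)))
  have hWcc : Continuous Wc := Complex.continuous_ofReal.comp hWtc
  have hGc : Continuous G := ((hσ.continuous.mul (Complex.continuous_conj.comp ht.continuous))).mul hWcc
  have hGsup : HasCompactSupport G := by
    apply HasCompactSupport.mul_right
    exact hσc.mul_right
  obtain ⟨C, hC⟩ : ∃ C, ∀ z : ℂ, z ≠ 0 → ‖fderiv ℝ G z‖ ≤ C := by
    have c1 : Continuous (fderiv ℝ ψ) := hψ.continuous_fderiv (by simp)
    have c2 : Continuous (fderiv ℝ σ) := hσ.continuous_fderiv (by simp)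
    have c3 : Continuous (fderiv ℝ t) := ht.continuous_fderiv (by simp)
    set M : ℂ → ℝ := fun z =>
      ‖σ z * (starRingEnd ℂ) (t z)‖ * (Wt ψ ε z * (‖fderiv ℝ ψ z‖ + ‖(2 : ℝ) * ε‖)) +
        Wt ψ ε z * (‖σ z‖ * ‖fderiv ℝ t z‖ + ‖t z‖ * ‖fderiv ℝ σ z‖) with hM
    have hMc : Continuous M := by
      refine Continuous.add ?_ ?_
      · exact ((hσ.continuous.mul (Complex.continuous_conj.comp ht.continuous)).norm).mul
          (hWtc.mul (c1.norm.add continuous_const))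
      · exact hWtc.mul ((hσ.continuous.norm.mul c3.norm).add (ht.continuous.norm.mul c2.norm))
    have hMsup : HasCompactSupport M := by
      apply HasCompactSupport.intro (hσc.union htc)
      intro z hz
      rw [Set.mem_union] at hz
      push_neg at hz
      have e1 : σ z = 0 := image_eq_zero_of_notMem_tsupport hz.1
      have e2 : t z = 0 := image_eq_zero_of_notMem_tsupport hz.2
      have e3 : fderiv ℝ σ z = 0 := by
        by_contra h
        exact hz.1 (support_fderiv_subset (𝕜 := ℝ) (Function.mem_support.2 h))
      have e4 : fderiv ℝ t z = 0 := by
        by_contra h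
        exact hz.2 (support_fderiv_subset (𝕜 := ℝ) (Function.mem_support.2 h))
      simp [hM, e1, e2, e3, e4]
    obtain ⟨C, hCM⟩ := hMsup.exists_bound_of_continuous hMc
    have hCJcomp : ∀ B : ℂ →L[ℝ] ℂ, ‖CJ.comp B‖ ≤ ‖B‖ := by
      intro B
      apply ContinuousLinearMap.opNorm_le_bound _ (norm_nonneg B)
      intro w
      rw [ContinuousLinearMap.comp_apply, hCJapp]
      calc ‖(starRingEnd ℂ) (B w)‖ = ‖B w‖ := by simp
      _ ≤ ‖B‖ * ‖w‖ := B.le_opNorm w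
    have hORcomp : ∀ L : ℂ →L[ℝ] ℝ, ‖Complex.ofRealCLM.comp L‖ ≤ ‖L‖ := by
      intro L
      apply ContinuousLinearMap.opNorm_le_bound _ (norm_nonneg L)
      intro w
      rw [ContinuousLinearMap.comp_apply]
      calc ‖Complex.ofRealCLM (L w)‖ = ‖L w‖ := by
            simp
      _ ≤ ‖L‖ * ‖w‖ := L.le_opNorm w
    have hWtpos : ∀ z : ℂ, 0 < Wt ψ ε z := fun z => Real.exp_pos _
    refine ⟨C, fun z hz => ?_⟩
    rw [(hDG z hz).fderiv]
    have hb1 : ‖DW ψ ε z‖ ≤ Wt ψ ε z * (‖fderiv ℝ ψ z‖ + ‖(2 : ℝ) * ε‖) := by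
      have hd := norm_dabsCLM_le z
      have hdnn := norm_nonneg (dabsCLM z)
      have hsm := norm_smul ((2 : ℝ) * ε) (dabsCLM z)
      have h2nn := norm_nonneg ((2 : ℝ) * ε)
      have h4 : ‖-fderiv ℝ ψ z - (2 * ε) • dabsCLM z‖ ≤ ‖fderiv ℝ ψ z‖ + ‖(2 : ℝ) * ε‖ := by
        have h5 := norm_sub_le (-fderiv ℝ ψ z) ((2 * ε) • dabsCLM z)
        rw [norm_neg, hsm] at h5
        nlinarith
      have hsmW := norm_smul (Wt ψ ε z) (-fderiv ℝ ψ z - (2 * ε) • dabsCLM z)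
      have hWn : ‖Wt ψ ε z‖ = Wt ψ ε z := by
        rw [Real.norm_eq_abs]
        exact _root_.abs_of_pos (hWtpos z)
      rw [hWn] at hsmW
      calc ‖DW ψ ε z‖ = ‖Complex.ofRealCLM.comp
            (Wt ψ ε z • (-fderiv ℝ ψ z - (2 * ε) • dabsCLM z))‖ := by rw [DW_def]
      _ ≤ ‖Wt ψ ε z • (-fderiv ℝ ψ z - (2 * ε) • dabsCLM z)‖ := hORcomp _
      _ = Wt ψ ε z * ‖-fderiv ℝ ψ z - (2 * ε) • dabsCLM z‖ := hsmW
      _ ≤ Wt ψ ε z * (‖fderiv ℝ ψ z‖ + ‖(2 : ℝ) * ε‖) :=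
          mul_le_mul_of_nonneg_left h4 (hWtpos z).le
    have hb2 : ‖σ z • CJ.comp (fderiv ℝ t z) + (starRingEnd ℂ) (t z) • fderiv ℝ σ z‖
        ≤ ‖σ z‖ * ‖fderiv ℝ t z‖ + ‖t z‖ * ‖fderiv ℝ σ z‖ := by
      have h5 := norm_add_le (σ z • CJ.comp (fderiv ℝ t z))
        ((starRingEnd ℂ) (t z) • fderiv ℝ σ z)
      have hs1 := norm_smul (σ z) (CJ.comp (fderiv ℝ t z))
      have hs2 := norm_smul ((starRingEnd ℂ) (t z)) (fderiv ℝ σ z)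
      have hconjn : ‖(starRingEnd ℂ) (t z)‖ = ‖t z‖ := by simp
      rw [hconjn] at hs2
      have h6 := hCJcomp (fderiv ℝ t z)
      have h7 : ‖σ z‖ * ‖CJ.comp (fderiv ℝ t z)‖ ≤ ‖σ z‖ * ‖fderiv ℝ t z‖ :=
        mul_le_mul_of_nonneg_left h6 (norm_nonneg _)
      rw [hs1, hs2] at h5
      linarith
    have hWcnorm : ‖Wc z‖ = Wt ψ ε z := by
      rw [hWc]
      simp only [Complex.norm_real, Real.norm_eq_abs]
      exact _root_.abs_of_pos (hWtpos z)
    have hn1 := norm_smul (σ z * (starRingEnd ℂ) (t z)) (DW ψ ε z)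
    have hn2 := norm_smul (Wc z)
      (σ z • CJ.comp (fderiv ℝ t z) + (starRingEnd ℂ) (t z) • fderiv ℝ σ z)
    have h8 := norm_add_le ((σ z * (starRingEnd ℂ) (t z)) • DW ψ ε z)
      (Wc z • (σ z • CJ.comp (fderiv ℝ t z) + (starRingEnd ℂ) (t z) • fderiv ℝ σ z))
    rw [hn1, hn2, hWcnorm] at h8
    have t1 : ‖σ z * (starRingEnd ℂ) (t z)‖ * ‖DW ψ ε z‖ ≤
        ‖σ z * (starRingEnd ℂ) (t z)‖ * (Wt ψ ε z * (‖fderiv ℝ ψ z‖ + ‖(2 : ℝ) * ε‖)) :=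
      mul_le_mul_of_nonneg_left hb1 (norm_nonneg _)
    have t2 : Wt ψ ε z *
        ‖σ z • CJ.comp (fderiv ℝ t z) + (starRingEnd ℂ) (t z) • fderiv ℝ σ z‖ ≤
        Wt ψ ε z * (‖σ z‖ * ‖fderiv ℝ t z‖ + ‖t z‖ * ‖fderiv ℝ σ z‖) :=
      mul_le_mul_of_nonneg_left hb2 (hWtpos z).le
    have hMz : M z = ‖σ z * (starRingEnd ℂ) (t z)‖ *
        (Wt ψ ε z * (‖fderiv ℝ ψ z‖ + ‖(2 : ℝ) * ε‖)) +
        Wt ψ ε z * (‖σ z‖ * ‖fderiv ℝ t z‖ + ‖t z‖ * ‖fderiv ℝ σ z‖) := rfl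
    have hfin : ‖DG z‖ ≤ M z := by rw [hMz]; linarith
    exact hfin.trans ((le_abs_self _).trans (hCM z))
  have key1 : ∫ z : ℂ, fderiv ℝ G z 1 = 0 :=
    key_one G hGc hGsup (fun z hz => (hDG z hz).differentiableAt) hC
  have keyI : ∫ z : ℂ, fderiv ℝ G z Complex.I = 0 :=
    key_I G hGc hGsup (fun z hz => (hDG z hz).differentiableAt) hC
  have hint1 : Integrable (fun z => fderiv ℝ G z 1) := integrable_fderiv_apply hGsup hC 1
  have hintI : Integrable (fun z => fderiv ℝ G z Complex.I) :=
    integrable_fderiv_apply hGsup hC Complex.I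
  set dG : ℂ → ℂ := fun z =>
    (2 : ℝ)⁻¹ • (fderiv ℝ G z 1 - Complex.I • fderiv ℝ G z Complex.I) with hdG
  have hdGint : Integrable dG := ((hint1.sub (hintI.smul Complex.I)).smul ((2:ℝ)⁻¹))
  have hdGzero : ∫ z : ℂ, dG z = 0 := by
    have hs : Integrable (fun z : ℂ => Complex.I • fderiv ℝ G z Complex.I) := by
      exact hintI.smul Complex.I
    rw [hdG]
    rw [integral_smul, integral_sub hint1 hs, integral_smul, key1, keyI]
    simp
  have hpt : ∀ z : ℂ, z ≠ 0 →
      σ z * (starRingEnd ℂ) (dbar t z) * (Wt ψ ε z : ℂ) =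
        (-(nablaZ ψ σ z) + (ε : ℂ) * ((starRingEnd ℂ) z / ((‖z‖ : ℝ) : ℂ)) * σ z) *
          (starRingEnd ℂ) (t z) * (Wt ψ ε z : ℂ) + dG z := by
    intro z hz
    have habs0 : ‖z‖ ≠ 0 := norm_ne_zero_iff.mpr hz
    have habs0c : ((‖z‖ : ℝ) : ℂ) ≠ 0 := Complex.ofReal_ne_zero.2 habs0
    have hfd : fderiv ℝ G z = DG z := (hDG z hz).fderiv
    have hψcfd : fderiv ℝ (fun w => ((ψ w : ℝ) : ℂ)) z =
        Complex.ofRealCLM.comp (fderiv ℝ ψ z) :=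
      (Complex.ofRealCLM.hasFDerivAt.comp z (hψz z)).fderiv
    have hconjz : (starRingEnd ℂ) z = (z.re : ℂ) - (z.im : ℂ) * Complex.I := by
      simp [Complex.ext_iff]
    rw [hdG]
    simp only [hfd, hDGdef, dbar, del, nablaZ, hψcfd, hWc, DW_def, dabsCLM, Wt,
      ContinuousLinearMap.add_apply, ContinuousLinearMap.smul_apply,
      ContinuousLinearMap.comp_apply, ContinuousLinearMap.coe_smul', Pi.smul_apply,
      ContinuousLinearMap.sub_apply, ContinuousLinearMap.neg_apply,
      Complex.ofRealCLM_apply, Complex.reCLM_apply, Complex.imCLM_apply, hCJapp,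
      Complex.real_smul, smul_eq_mul, Complex.one_re, Complex.one_im, Complex.I_re,
      Complex.I_im, map_mul, map_add, map_sub, map_neg, Complex.conj_ofReal, Complex.conj_I,
      Complex.ofReal_mul, Complex.ofReal_add, Complex.ofReal_sub, Complex.ofReal_neg,
      Complex.ofReal_inv, hconjz, mul_zero, mul_one, zero_mul, add_zero, zero_add, map_ofNat]
    field_simp
    simp only [map_inv₀, map_div₀, map_one, Complex.conj_ofReal, Complex.ofReal_ofNat, map_ofNat]
    ring
  have hRint : Integrable (fun z =>
      (-(nablaZ ψ σ z) + (ε : ℂ) * ((starRingEnd ℂ) z / ((‖z‖ : ℝ) : ℂ)) * σ z) *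
        (starRingEnd ℂ) (t z) * (Wt ψ ε z : ℂ)) := by
    have c2 : Continuous (fderiv ℝ σ) := hσ.continuous_fderiv (by simp)
    have hψcC : ContDiff ℝ (⊤ : ℕ∞) (fun w => ((ψ w : ℝ) : ℂ)) :=
      Complex.ofRealCLM.contDiff.comp hψ
    have c4 : Continuous (fderiv ℝ (fun w => ((ψ w : ℝ) : ℂ))) :=
      hψcC.continuous_fderiv (by simp)
    have hdelσ : Continuous (del σ) := by
      show Continuous fun z => (2 : ℝ)⁻¹ •
        (fderiv ℝ σ z 1 - Complex.I • fderiv ℝ σ z Complex.I)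
      exact (((c2.clm_apply continuous_const).sub
        ((c2.clm_apply continuous_const).const_smul Complex.I)).const_smul ((2:ℝ)⁻¹))
    have hdelψ : Continuous (del (fun w => ((ψ w : ℝ) : ℂ))) := by
      show Continuous fun z => (2 : ℝ)⁻¹ •
        (fderiv ℝ (fun w => ((ψ w : ℝ) : ℂ)) z 1 -
          Complex.I • fderiv ℝ (fun w => ((ψ w : ℝ) : ℂ)) z Complex.I)
      exact (((c4.clm_apply continuous_const).sub
        ((c4.clm_apply continuous_const).const_smul Complex.I)).const_smul ((2:ℝ)⁻¹))
    have hnabla : Continuous (nablaZ ψ σ) := by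
      show Continuous fun z => del σ z - del (fun w => ((ψ w : ℝ) : ℂ)) z * σ z
      exact hdelσ.sub (hdelψ.mul hσ.continuous)
    have hconjtc : Continuous fun z => (starRingEnd ℂ) (t z) :=
      Complex.continuous_conj.comp ht.continuous
    have hconjsupp : HasCompactSupport fun z => (starRingEnd ℂ) (t z) :=
      htc.comp_left (map_zero _)
    have hR1 : Integrable (fun z => -(nablaZ ψ σ z) * (starRingEnd ℂ) (t z) * Wc z) := by
      apply Continuous.integrable_of_hasCompactSupport
      · exact (hnabla.neg.mul hconjtc).mul hWcc
      · exact (hconjsupp.mul_left).mul_right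
    have hR2 : Integrable (fun z =>
        (ε : ℂ) * ((starRingEnd ℂ) z / ((‖z‖ : ℝ) : ℂ)) * σ z *
          (starRingEnd ℂ) (t z) * Wc z) := by
      have hmeas : AEStronglyMeasurable (fun z =>
          (ε : ℂ) * ((starRingEnd ℂ) z / ((‖z‖ : ℝ) : ℂ)) * σ z *
            (starRingEnd ℂ) (t z) * Wc z) volume := by
        apply Measurable.aestronglyMeasurable
        apply Measurable.mul
        apply Measurable.mul
        apply Measurable.mul
        · exact measurable_const.mul
            (Complex.continuous_conj.measurable.div
              ((Complex.continuous_ofReal.comp continuous_norm).measurable))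
        · exact hσ.continuous.measurable
        · exact hconjtc.measurable
        · exact hWcc.measurable
      have hprod : HasCompactSupport (fun z => σ z * (starRingEnd ℂ) (t z) * Wc z) := by
        apply HasCompactSupport.intro hσc
        intro z hz
        rw [image_eq_zero_of_notMem_tsupport hz]
        ring
      obtain ⟨C2, hC2⟩ := hprod.exists_bound_of_continuous
        ((hσ.continuous.mul hconjtc).mul hWcc)
      have hqb : ∀ z : ℂ, ‖(starRingEnd ℂ) z / ((‖z‖ : ℝ) : ℂ)‖ ≤ 1 := by
        intro z
        rcases eq_or_ne z 0 with rfl | hz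
        · simp
        · rw [norm_div]
          simp only [Complex.norm_conj, Complex.norm_real, Real.norm_eq_abs,
            _root_.abs_of_nonneg (norm_nonneg z)]
          rw [div_self (norm_ne_zero_iff.mpr hz)]
      apply integrable_of_bdd_compact (K := tsupport σ) hmeas hσc (C := |ε| * C2)
      · intro z hzsupp
        rw [image_eq_zero_of_notMem_tsupport hzsupp]
        ring
      · filter_upwards with z
        have hb : ‖(ε : ℂ) * ((starRingEnd ℂ) z / ((‖z‖ : ℝ) : ℂ)) * σ z *
            (starRingEnd ℂ) (t z) * Wc z‖ =
            ‖(ε : ℂ) * ((starRingEnd ℂ) z / ((‖z‖ : ℝ) : ℂ))‖ *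
              ‖σ z * (starRingEnd ℂ) (t z) * Wc z‖ := by
          rw [← norm_mul]
          congr 1
          ring
        rw [hb]
        have h1 : ‖(ε : ℂ) * ((starRingEnd ℂ) z / ((‖z‖ : ℝ) : ℂ))‖ ≤ |ε| := by
          rw [norm_mul]
          have : ‖(ε : ℂ)‖ = |ε| := by
            simp
          rw [this]
          calc |ε| * ‖(starRingEnd ℂ) z / ((‖z‖ : ℝ) : ℂ)‖ ≤ |ε| * 1 :=
                mul_le_mul_of_nonneg_left (hqb z) (abs_nonneg ε)
          _ = |ε| := mul_one _
        have h2 : ‖σ z * (starRingEnd ℂ) (t z) * Wc z‖ ≤ C2 := hC2 z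
        exact mul_le_mul h1 h2 (norm_nonneg _) (abs_nonneg ε)
    have hsplit : (fun z : ℂ =>
        (-(nablaZ ψ σ z) + (ε : ℂ) * ((starRingEnd ℂ) z / ((‖z‖ : ℝ) : ℂ)) * σ z) *
          (starRingEnd ℂ) (t z) * (Wt ψ ε z : ℂ)) =
        fun z => -(nablaZ ψ σ z) * (starRingEnd ℂ) (t z) * Wc z +
          (ε : ℂ) * ((starRingEnd ℂ) z / ((‖z‖ : ℝ) : ℂ)) * σ z *
            (starRingEnd ℂ) (t z) * Wc z := by
      funext z
      rw [hWc]
      ring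
    rw [hsplit]
    exact hR1.add hR2
  have hae0 : ∀ᵐ z : ℂ, z ≠ 0 := by
    rw [ae_iff]
    apply measure_mono_null _ (measure_singleton (0 : ℂ))
    intro z hz
    simpa using hz
  have heq : (fun z : ℂ => σ z * (starRingEnd ℂ) (dbar t z) * (Wt ψ ε z : ℂ)) =ᵐ[volume]
      fun z => (-(nablaZ ψ σ z) + (ε : ℂ) * ((starRingEnd ℂ) z / ((‖z‖ : ℝ) : ℂ)) * σ z) *
        (starRingEnd ℂ) (t z) * (Wt ψ ε z : ℂ) + dG z := by
    filter_upwards [hae0] with z hz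
    exact hpt z hz
  rw [integral_congr_ae heq, integral_add hRint hdGint, hdGzero, add_zero]
end

section
/- Let ψ : ℂ → ℝ be smooth, κ₀ > 0, and let ε satisfy 0 < ε < √κ₀/2; write W(z) = e^{-ψ(z) - 2ε|z|} and ∇_z f = ∂f − (∂ψ)·f. Assume that κ₀ · ∫_ℂ |s(z)|² W(z) dA ≤ ∫_ℂ |∇_z s(z)|² W(z) dA for every smooth compactly supported s : ℂ → ℂ. Then for every smooth compactly supported σ : ℂ → ℂ one has the basic estimate (κ₀/4) · ∫_ℂ |σ(z)|² W(z) dA ≤ ∫_ℂ |−∇_zσ(z) + ε·(conj(z)/|z|)·σ(z)|² W(z) dA, where conj(z)/|z| is interpreted as 0 at z = 0. -/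
open Complex MeasureTheory

lemma del_continuous (f : ℂ → ℂ) (hf : ContDiff ℝ 1 f) : Continuous (del f) := by
  unfold del
  exact continuous_const.smul (((hf.continuous_fderiv one_ne_zero).clm_apply continuous_const).sub
    (((hf.continuous_fderiv one_ne_zero).clm_apply continuous_const).const_smul Complex.I))

lemma del_compact_support (f : ℂ → ℂ) (hfc : HasCompactSupport f) :
    HasCompactSupport (del f) :=
  (HasCompactSupport.fderiv (𝕜 := ℝ) hfc).comp_left
    (g := fun L : ℂ →L[ℝ] ℂ => (2 : ℝ)⁻¹ • (L 1 - Complex.I • L Complex.I)) (by simp)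

lemma abs_unit_le_one (z : ℂ) : ‖(starRingEnd ℂ) z / (‖z‖ : ℂ)‖ ≤ 1 := by
  rcases eq_or_ne z 0 with h | h
  · simp [h]
  · simp [norm_div, Complex.norm_conj, Complex.norm_real,
      div_self (norm_ne_zero_iff.mpr h)]

/-- The basic estimate for the formal adjoint `σ ↦ -∇_z σ + ε (z̄/|z|) σ` of `∂̄`,
assuming the weighted eigenvalue inequality for `∇_z` and `0 < ε < √κ₀/2`. -/
theorem basic_estimate (ψ : ℂ → ℝ) (hψ : ContDiff ℝ (⊤ : ℕ∞) ψ)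
    (κ₀ : ℝ) (hκ₀ : 0 < κ₀) (ε : ℝ) (hε : 0 < ε) (hε' : ε < Real.sqrt κ₀ / 2)
    (heig : ∀ s : ℂ → ℂ, ContDiff ℝ (⊤ : ℕ∞) s → HasCompactSupport s →
      κ₀ * ∫ z : ℂ, ‖s z‖ ^ 2 * Wt ψ ε z ≤
        ∫ z : ℂ, ‖nablaZ ψ s z‖ ^ 2 * Wt ψ ε z)
    (σ : ℂ → ℂ) (hσ : ContDiff ℝ (⊤ : ℕ∞) σ) (hσc : HasCompactSupport σ) :
    κ₀ / 4 * ∫ z : ℂ, ‖σ z‖ ^ 2 * Wt ψ ε z ≤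
      ∫ z : ℂ, ‖
          -(nablaZ ψ σ z) + (ε : ℂ) * ((starRingEnd ℂ) z / (‖z‖ : ℂ)) * σ z‖ ^ 2 *
        Wt ψ ε z := by
  have hWcont : Continuous (Wt ψ ε) := by
    unfold Wt
    exact Real.continuous_exp.comp
      ((hψ.continuous.neg).sub (continuous_const.mul continuous_norm))
  have hWnn : ∀ z, 0 ≤ Wt ψ ε z := fun z => Real.exp_nonneg _
  have hσcont : Continuous σ := hσ.continuous
  have hψ' : ContDiff ℝ 1 (fun w : ℂ => (ψ w : ℂ)) :=
    Complex.ofRealCLM.contDiff.comp (hψ.of_le (by exact_mod_cast le_top))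
  have hNcont : Continuous (nablaZ ψ σ) := by
    unfold nablaZ
    exact (del_continuous σ (hσ.of_le (by simp))).sub ((del_continuous _ hψ').mul hσcont)
  have hNsupp : HasCompactSupport (nablaZ ψ σ) := by
    unfold nablaZ
    have h2 : HasCompactSupport (fun z => del (fun w : ℂ => (ψ w : ℂ)) z * σ z) := hσc.mul_left
    exact (del_compact_support σ hσc).comp₂_left h2 (sub_zero 0)
  -- integrability of |σ|²W and |∇σ|²W
  have mkInt : ∀ g : ℂ → ℂ, Continuous g → HasCompactSupport g →
      Integrable (fun z => ‖g z‖ ^ 2 * Wt ψ ε z) := by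
    intro g hg hgc
    apply Continuous.integrable_of_hasCompactSupport
    · exact ((continuous_norm.comp hg).pow 2).mul hWcont
    · exact (hgc.comp_left (g := fun w : ℂ => ‖w‖ ^ 2) (by simp)).mul_right
  have intA := mkInt σ hσcont hσc
  have intB := mkInt _ hNcont hNsupp
  set T : ℂ → ℂ :=
    fun z => -(nablaZ ψ σ z) + (ε : ℂ) * ((starRingEnd ℂ) z / (‖z‖ : ℂ)) * σ z with hT
  have hTmeas : Measurable fun z => ‖T z‖ ^ 2 * Wt ψ ε z := by
    have hu : Measurable (fun z : ℂ => (starRingEnd ℂ) z / (‖z‖ : ℂ)) :=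
      (Complex.continuous_conj.measurable).div
        (Complex.continuous_ofReal.comp continuous_norm).measurable
    have hTm : Measurable T :=
      hNcont.measurable.neg.add ((measurable_const.mul hu).mul hσcont.measurable)
    exact ((continuous_norm.measurable.comp hTm).pow_const 2).mul hWcont.measurable
  -- pointwise bounds
  have habsT : ∀ z, ‖T z‖ ≤ ‖nablaZ ψ σ z‖ + ε * ‖σ z‖ := by
    intro z
    have h1 : ‖T z‖ ≤ ‖-(nablaZ ψ σ z)‖ +
        ‖(ε : ℂ) * ((starRingEnd ℂ) z / (‖z‖ : ℂ)) * σ z‖ :=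
      norm_add_le _ _
    have h2 : ‖(ε : ℂ) * ((starRingEnd ℂ) z / (‖z‖ : ℂ)) * σ z‖
        ≤ ε * ‖σ z‖ := by
      rw [norm_mul, norm_mul, Complex.norm_real, Real.norm_eq_abs, _root_.abs_of_nonneg hε.le]
      nlinarith [mul_le_mul_of_nonneg_right
        (mul_le_mul_of_nonneg_left (abs_unit_le_one z) hε.le) (norm_nonneg (σ z))]
    rw [norm_neg] at h1
    linarith
  have habsN : ∀ z, ‖nablaZ ψ σ z‖ ≤ ‖T z‖ + ε * ‖σ z‖ := by
    intro z
    have : nablaZ ψ σ z = -(T z) + (ε : ℂ) * ((starRingEnd ℂ) z / (‖z‖ : ℂ)) * σ z := by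
      rw [hT]; ring
    rw [this]
    have h1 := norm_add_le (-(T z))
      ((ε : ℂ) * ((starRingEnd ℂ) z / (‖z‖ : ℂ)) * σ z)
    have h2 : ‖(ε : ℂ) * ((starRingEnd ℂ) z / (‖z‖ : ℂ)) * σ z‖
        ≤ ε * ‖σ z‖ := by
      rw [norm_mul, norm_mul, Complex.norm_real, Real.norm_eq_abs, _root_.abs_of_nonneg hε.le]
      nlinarith [mul_le_mul_of_nonneg_right
        (mul_le_mul_of_nonneg_left (abs_unit_le_one z) hε.le) (norm_nonneg (σ z))]
    rw [norm_neg] at h1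
    linarith
  -- integrability of the target
  have intT : Integrable (fun z => ‖T z‖ ^ 2 * Wt ψ ε z) := by
    refine Integrable.mono' ((intB.const_mul 2).add (intA.const_mul (2 * ε ^ 2)))
      hTmeas.aestronglyMeasurable ?_
    filter_upwards with z
    simp only [Pi.add_apply]
    rw [Real.norm_eq_abs,
      _root_.abs_of_nonneg (mul_nonneg (by positivity) (hWnn z))]
    have h := habsT z
    have hW := hWnn z
    have hsq : ‖T z‖ ^ 2 ≤
        2 * ‖nablaZ ψ σ z‖ ^ 2 + 2 * ε ^ 2 * ‖σ z‖ ^ 2 := by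
      nlinarith [norm_nonneg (σ z), norm_nonneg (nablaZ ψ σ z),
        norm_nonneg (T z), sq_nonneg (‖nablaZ ψ σ z‖ - ε * ‖σ z‖)]
    nlinarith [mul_le_mul_of_nonneg_right hsq hW]
  -- B ≤ 2C + 2ε²A
  have hBC : (∫ z : ℂ, ‖nablaZ ψ σ z‖ ^ 2 * Wt ψ ε z) ≤
      ∫ z : ℂ, (2 * (‖T z‖ ^ 2 * Wt ψ ε z)
        + 2 * ε ^ 2 * (‖σ z‖ ^ 2 * Wt ψ ε z)) := by
    refine integral_mono intB ((intT.const_mul 2).add (intA.const_mul (2 * ε ^ 2))) ?_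
    intro z
    simp only [Pi.add_apply]
    have h := habsN z
    have hW := hWnn z
    have hsq : ‖nablaZ ψ σ z‖ ^ 2 ≤
        2 * ‖T z‖ ^ 2 + 2 * ε ^ 2 * ‖σ z‖ ^ 2 := by
      nlinarith [norm_nonneg (nablaZ ψ σ z), norm_nonneg (T z),
        norm_nonneg (σ z), sq_nonneg (‖T z‖ - ε * ‖σ z‖)]
    nlinarith [mul_le_mul_of_nonneg_right hsq hW]
  rw [integral_add (intT.const_mul 2) (intA.const_mul (2 * ε ^ 2)),
    integral_const_mul, integral_const_mul] at hBC
  have hA : 0 ≤ ∫ z : ℂ, ‖σ z‖ ^ 2 * Wt ψ ε z :=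
    integral_nonneg fun z => mul_nonneg (by positivity) (hWnn z)
  have hAB := heig σ hσ hσc
  have hε2 : ε ^ 2 < κ₀ / 4 := by
    have h2 : (2 * ε) ^ 2 < Real.sqrt κ₀ ^ 2 := by
      apply sq_lt_sq' <;> nlinarith [Real.sqrt_nonneg κ₀]
    rw [Real.sq_sqrt hκ₀.le] at h2
    nlinarith
  show κ₀ / 4 * _ ≤ ∫ z : ℂ, ‖T z‖ ^ 2 * Wt ψ ε z
  nlinarith [mul_le_mul_of_nonneg_right hε2.le hA]
end

section
/- For every κ₀ > 0 and every ε > 0 there exists a smooth compactly supported function s : ℂ → ℂ, not identically zero, such that ∫_ℂ |∂̄s(z)|² e^{-ε|z|} dA < κ₀ · ∫_ℂ |s(z)|² e^{-ε|z|} dA. -/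
open Complex MeasureTheory

lemma aux_hasFDerivAt (φ : ℂ → ℝ) (hφ : ContDiff ℝ (⊤:ℕ∞) φ) (δ : ℝ) (z : ℂ) :
    HasFDerivAt (fun w => ((φ (δ • w) : ℝ) : ℂ))
      (Complex.ofRealCLM.comp ((fderiv ℝ φ (δ • z)).comp
        (δ • ContinuousLinearMap.id ℝ ℂ))) z := by
  have h1 : HasFDerivAt (fun w : ℂ => δ • w) (δ • ContinuousLinearMap.id ℝ ℂ) z :=
    (hasFDerivAt_id z).const_smul δ
  have h2 : HasFDerivAt φ (fderiv ℝ φ (δ • z)) (δ • z) :=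
    (hφ.differentiable (by simp) (δ • z)).hasFDerivAt
  exact Complex.ofRealCLM.hasFDerivAt.comp z (h2.comp z h1)

lemma aux_dbar_eq (φ : ℂ → ℝ) (hφ : ContDiff ℝ (⊤:ℕ∞) φ) (δ : ℝ) (z : ℂ) :
    dbar (fun w => ((φ (δ • w) : ℝ) : ℂ)) z =
      (2 : ℝ)⁻¹ • ((δ : ℂ) * (↑(fderiv ℝ φ (δ • z) 1) : ℂ)
        + Complex.I * ((δ : ℂ) * (↑(fderiv ℝ φ (δ • z) Complex.I) : ℂ))) := by
  have h := (aux_hasFDerivAt φ hφ δ z).fderiv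
  rw [dbar, h]
  simp


lemma aux_dbar_bound (φ : ℂ → ℝ) (hφ : ContDiff ℝ (⊤:ℕ∞) φ) (δ : ℝ) (z : ℂ) :
    ‖dbar (fun w => ((φ (δ • w) : ℝ) : ℂ)) z‖ ≤ |δ| * ‖fderiv ℝ φ (δ • z)‖ := by
  rw [aux_dbar_eq φ hφ δ z]
  set L := fderiv ℝ φ (δ • z) with hL
  have h1 : |L 1| ≤ ‖L‖ := by simpa using L.le_opNorm 1
  have h2 : |L Complex.I| ≤ ‖L‖ := by simpa using L.le_opNorm Complex.I
  calc ‖(2 : ℝ)⁻¹ • ((δ:ℂ) * (↑(L 1) : ℂ) + Complex.I * ((δ:ℂ) * (↑(L Complex.I) : ℂ)))‖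
      = 2⁻¹ * ‖(δ:ℂ) * (↑(L 1) : ℂ) + Complex.I * ((δ:ℂ) * (↑(L Complex.I) : ℂ))‖ := by
        rw [norm_smul]; norm_num
    _ ≤ 2⁻¹ * (‖(δ:ℂ) * (↑(L 1) : ℂ)‖ + ‖Complex.I * ((δ:ℂ) * (↑(L Complex.I) : ℂ))‖) := by
        gcongr
        exact norm_add_le _ _
    _ = 2⁻¹ * (|δ| * |L 1| + |δ| * |L Complex.I|) := by
        simp [norm_mul]
    _ ≤ 2⁻¹ * (|δ| * ‖L‖ + |δ| * ‖L‖) := by gcongr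
    _ = |δ| * ‖L‖ := by ring

lemma aux_fderiv_zero (f : ContDiffBump (0:ℂ)) (w : ℂ)
    (hw : ‖w‖ < f.rIn ∨ f.rOut < ‖w‖) : fderiv ℝ (⇑f) w = 0 := by
  rcases hw with hw | hw
  · have h : (⇑f : ℂ → ℝ) =ᶠ[nhds w] fun _ => (1:ℝ) := by
      filter_upwards [Metric.isOpen_ball.mem_nhds (by simpa [Metric.mem_ball,
        dist_zero_right] using hw : w ∈ Metric.ball (0:ℂ) f.rIn)] with x hx
      exact f.one_of_mem_closedBall (Metric.ball_subset_closedBall hx)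
    rw [h.fderiv_eq, fderiv_fun_const]
    rfl
  · have h : (⇑f : ℂ → ℝ) =ᶠ[nhds w] fun _ => (0:ℝ) := by
      filter_upwards [(Metric.isClosed_closedBall (x := (0:ℂ)) (ε := f.rOut)).isOpen_compl.mem_nhds
        (by simpa [Metric.mem_closedBall, dist_zero_right, not_le] using hw :
          w ∈ (Metric.closedBall (0:ℂ) f.rOut)ᶜ)] with x hx
      have : x ∉ Function.support ⇑f := by
        rw [f.support_eq]
        intro hmem
        exact hx (Metric.ball_subset_closedBall hmem)
      simpa using Function.notMem_support.mp this
    rw [h.fderiv_eq, fderiv_fun_const]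
    rfl

/-- For every `κ₀ > 0` and `ε > 0`, the weighted eigenvalue inequality for the flat `∂̄`
fails: there is a nontrivial smooth compactly supported `s` with
`∫ |∂̄s|² e^{-ε|z|} < κ₀ ∫ |s|² e^{-ε|z|}`. -/
theorem exists_test_function_violating_eigenvalue (κ₀ ε : ℝ) (hκ₀ : 0 < κ₀) (hε : 0 < ε) :
    ∃ s : ℂ → ℂ, ContDiff ℝ (⊤ : ℕ∞) s ∧ HasCompactSupport s ∧ s ≠ 0 ∧
      ∫ z : ℂ, ‖dbar s z‖ ^ 2 * Real.exp (-(ε * ‖z‖)) <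
        κ₀ * ∫ z : ℂ, ‖s z‖ ^ 2 * Real.exp (-(ε * ‖z‖)) := by
  classical
  let f : ContDiffBump (0:ℂ) := ⟨1, 2, one_pos, one_lt_two⟩
  have hrIn : f.rIn = 1 := rfl
  have hrOut : f.rOut = 2 := rfl
  set φ : ℂ → ℝ := ⇑f with hφdef
  have hφc : ContDiff ℝ (⊤:ℕ∞) φ := f.contDiff
  have hφs : HasCompactSupport φ := f.hasCompactSupport
  obtain ⟨C, hC⟩ := (hφs.fderiv (𝕜 := ℝ)).exists_bound_of_continuous
    (hφc.continuous_fderiv (by simp))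
  set B := C + 1 with hBdef
  have hB1 : 1 ≤ B := by
    have := (norm_nonneg (fderiv ℝ φ 0)).trans (hC 0); linarith
  have hBpos : 0 < B := lt_of_lt_of_le one_pos hB1
  have hCB : ∀ x, ‖fderiv ℝ φ x‖ ≤ B := fun x => (hC x).trans (by linarith)
  set t := κ₀ * Real.exp (-ε) / (4 * B ^ 2) with ht_def
  have ht : 0 < t := by positivity
  set D := |Real.log t| + 1 + ε with hDdef
  have hDpos : 0 < D := by positivity
  set δ := ε / D with hδdef
  have hδ : 0 < δ := by positivity
  have hδ1 : δ ≤ 1 := by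
    rw [hδdef, div_le_one hDpos, hDdef]
    have := abs_nonneg (Real.log t); linarith
  have hεδ : ε / δ = D := by
    rw [hδdef]; field_simp
  have hexp : Real.exp (-(ε/δ)) < t := by
    rw [hεδ]
    have h1 : -D < Real.log t := by
      have := neg_abs_le (Real.log t); rw [hDdef]; linarith
    calc Real.exp (-D) < Real.exp (Real.log t) := Real.exp_lt_exp.mpr h1
      _ = t := Real.exp_log ht
  set s : ℂ → ℂ := fun w => ((φ (δ • w) : ℝ) : ℂ) with hs_def
  have hsc : ContDiff ℝ (⊤:ℕ∞) s :=
    Complex.ofRealCLM.contDiff.comp (hφc.comp (contDiff_id.const_smul δ))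
  have hss : HasCompactSupport s :=
    (hφs.comp_smul (ne_of_gt hδ)).comp_left (g := Complex.ofReal) (by simp)
  -- dbar vanishing
  have hdbar0 : ∀ z : ℂ, ‖δ • z‖ < 1 ∨ 2 < ‖δ • z‖ → dbar s z = 0 := by
    intro z hz
    have h0 : fderiv ℝ φ (δ • z) = 0 := by
      apply aux_fderiv_zero f (δ • z)
      rw [hrIn, hrOut]; exact hz
    rw [hs_def, aux_dbar_eq φ hφc δ z, h0]
    simp
  -- dbar bound
  have hdb : ∀ z : ℂ, ‖dbar s z‖ ≤ δ * B := by
    intro z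
    refine (aux_dbar_bound φ hφc δ z).trans ?_
    rw [abs_of_pos hδ]
    exact mul_le_mul_of_nonneg_left (hCB _) hδ.le
  refine ⟨s, hsc, hss, ?_, ?_⟩
  · intro h0
    have h1 : s 0 = 1 := by
      rw [hs_def]
      simp only [smul_zero]
      norm_cast
      exact f.one_of_mem_closedBall (by simp [hrIn])
    rw [h0] at h1
    simp at h1
  · -- the integral inequality
    set r : ℝ := 2 / δ with hr_def
    have hrpos : 0 < r := by positivity
    set K : ℝ := (δ * B)^2 * Real.exp (-(ε/δ)) with hK_def
    have hKnn : 0 ≤ K := by positivity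
    -- upper bound for the dbar integral
    have hup : ∀ z : ℂ, ‖dbar s z‖ ^ 2 * Real.exp (-(ε * ‖z‖)) ≤
        Set.indicator (Metric.closedBall (0:ℂ) r) (fun _ => K) z := by
      intro z
      have hindnn : 0 ≤ Set.indicator (Metric.closedBall (0:ℂ) r) (fun _ => K) z :=
        Set.indicator_nonneg (fun _ _ => hKnn) z
      rcases lt_or_ge (‖δ • z‖) 1 with h1 | h1
      · rw [hdbar0 z (Or.inl h1)]
        simpa using hindnn
      rcases le_or_gt (‖δ • z‖) 2 with h2 | h2
      · have hnz : ‖δ • z‖ = δ * ‖z‖ := by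
          rw [norm_smul, Real.norm_eq_abs, abs_of_pos hδ]
        have hmem : z ∈ Metric.closedBall (0:ℂ) r := by
          rw [Metric.mem_closedBall, dist_zero_right, hr_def, le_div_iff₀ hδ]
          rw [hnz] at h2; linarith [mul_comm δ ‖z‖]
        rw [Set.indicator_of_mem hmem]
        have hzlb : ε / δ ≤ ε * ‖z‖ := by
          rw [hnz] at h1
          rw [div_le_iff₀ hδ]
          nlinarith
        have hexple : Real.exp (-(ε * ‖z‖)) ≤ Real.exp (-(ε/δ)) :=
          Real.exp_le_exp.mpr (by linarith)
        rw [hK_def]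
        exact mul_le_mul (pow_le_pow_left₀ (norm_nonneg _) (hdb z) 2) hexple
          (Real.exp_nonneg _) (by positivity)
      · rw [hdbar0 z (Or.inr h2)]
        simpa using hindnn
    -- lower bound for the s integral
    have hlow : ∀ z : ℂ, Set.indicator (Metric.closedBall (0:ℂ) 1)
        (fun _ => Real.exp (-ε)) z ≤ ‖s z‖ ^ 2 * Real.exp (-(ε * ‖z‖)) := by
      intro z
      by_cases hz : z ∈ Metric.closedBall (0:ℂ) 1
      · rw [Set.indicator_of_mem hz]
        have hz1 : ‖z‖ ≤ 1 := by
          simpa [dist_zero_right] using hz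
        have hmem1 : δ • z ∈ Metric.closedBall (0:ℂ) f.rIn := by
          rw [Metric.mem_closedBall, dist_zero_right, hrIn, norm_smul,
            Real.norm_eq_abs, abs_of_pos hδ]
          calc δ * ‖z‖ ≤ δ * 1 :=
                mul_le_mul_of_nonneg_left hz1 hδ.le
            _ ≤ 1 := by linarith
        have h1' : φ (δ • z) = 1 := f.one_of_mem_closedBall hmem1
        have hs1 : s z = 1 := by
          show ((φ (δ • z) : ℝ) : ℂ) = 1
          rw [h1']
          norm_num
        rw [hs1]
        simp only [norm_one, one_pow, one_mul]
        apply Real.exp_le_exp.mpr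
        have hza : 0 ≤ ‖z‖ := norm_nonneg z
        nlinarith
      · rw [Set.indicator_of_notMem hz]
        positivity
    -- integrability
    have hI2 : Integrable (fun z : ℂ => ‖s z‖ ^ 2 * Real.exp (-(ε * ‖z‖))) := by
      apply Continuous.integrable_of_hasCompactSupport
      · exact ((continuous_norm.comp hsc.continuous).pow 2).mul
          (Real.continuous_exp.comp (continuous_const.mul continuous_norm).neg)
      · exact (hss.comp_left (g := fun x : ℂ => ‖x‖ ^ 2) (by simp)).mul_right
    have hIndInt : Integrable (Set.indicator (Metric.closedBall (0:ℂ) r) (fun _ => K)) := by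
      rw [integrable_indicator_iff measurableSet_closedBall]
      exact (integrableOn_const_iff).mpr (Or.inr (measure_closedBall_lt_top))
    -- compute indicator integrals
    have hvol : ∀ ρ : ℝ, 0 ≤ ρ → (volume (Metric.closedBall (0:ℂ) ρ)).toReal = ρ^2 * Real.pi := by
      intro ρ hρ
      rw [Complex.volume_closedBall]
      rw [ENNReal.toReal_mul, ENNReal.toReal_pow, ENNReal.toReal_ofReal hρ]
      simp
    have hint_ind1 : ∫ z : ℂ, Set.indicator (Metric.closedBall (0:ℂ) r) (fun _ => K) z =
        r^2 * Real.pi * K := by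
      rw [integral_indicator_const _ measurableSet_closedBall, Measure.real, hvol r hrpos.le, smul_eq_mul]
    have hint_ind2 : ∫ z : ℂ, Set.indicator (Metric.closedBall (0:ℂ) 1)
        (fun _ => Real.exp (-ε)) z = Real.pi * Real.exp (-ε) := by
      rw [integral_indicator_const _ measurableSet_closedBall, Measure.real, hvol 1 one_pos.le, smul_eq_mul]
      ring
    have hI1le : ∫ z : ℂ, ‖dbar s z‖ ^ 2 * Real.exp (-(ε * ‖z‖)) ≤
        r^2 * Real.pi * K := by
      rw [← hint_ind1]
      exact integral_mono_of_nonneg (Filter.Eventually.of_forall (fun z => by positivity))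
        hIndInt (Filter.Eventually.of_forall hup)
    have hI2ge : Real.pi * Real.exp (-ε) ≤
        ∫ z : ℂ, ‖s z‖ ^ 2 * Real.exp (-(ε * ‖z‖)) := by
      rw [← hint_ind2]
      exact integral_mono_of_nonneg (Filter.Eventually.of_forall (fun z =>
        Set.indicator_nonneg (fun _ _ => Real.exp_nonneg _) z)) hI2
        (Filter.Eventually.of_forall hlow)
    -- final arithmetic
    have harith : r^2 * Real.pi * K = 4 * Real.pi * B^2 * Real.exp (-(ε/δ)) := by
      rw [hK_def, hr_def]
      field_simp
      ring
    have hfinal : 4 * Real.pi * B^2 * Real.exp (-(ε/δ)) < κ₀ * (Real.pi * Real.exp (-ε)) := by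
      have h4 : (0:ℝ) < 4 * Real.pi * B^2 := by positivity
      calc 4 * Real.pi * B^2 * Real.exp (-(ε/δ)) < 4 * Real.pi * B^2 * t :=
            mul_lt_mul_of_pos_left hexp h4
        _ = κ₀ * (Real.pi * Real.exp (-ε)) := by
            rw [ht_def]; field_simp
    calc ∫ z : ℂ, ‖dbar s z‖ ^ 2 * Real.exp (-(ε * ‖z‖)) ≤
          r^2 * Real.pi * K := hI1le
      _ = 4 * Real.pi * B^2 * Real.exp (-(ε/δ)) := harith
      _ < κ₀ * (Real.pi * Real.exp (-ε)) := hfinal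
      _ ≤ κ₀ * ∫ z : ℂ, ‖s z‖ ^ 2 * Real.exp (-(ε * ‖z‖)) :=
          mul_le_mul_of_nonneg_left hI2ge hκ₀.le
end

section
/- Let ε > 0. Let χ : ℂ → ℝ be a smooth compactly supported function with χ(z) = 1 for |z| ≤ 1 and χ(z) = 0 for |z| ≥ 2, and let u : ℂ → ℂ be holomorphic (differentiable over ℂ) with u(z) ≠ 0 for all z. Define v : ℂ → ℂ by v(z) = (∂̄χ)(z)·u(z)/z for z ≠ 0 and v(0) = 0. Suppose w : ℂ → ℂ is differentiable (over ℝ) with ∂̄w(z) = v(z) for all z ∈ ℂ and ∫_ℂ |w(z)|² e^{-2ε|z|} dA < ∞. Then the function s(z) := χ(z)·u(z) − z·w(z) is holomorphic on ℂ, satisfies s(0) = u(0) ≠ 0, and ∫_ℂ |s(z)|² e^{-4ε|z|} dA < ∞. -/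
open Complex MeasureTheory

lemma diffAt_of_cr {f : ℂ → ℂ} {z : ℂ} {f' : ℂ →L[ℝ] ℂ} (hf : HasFDerivAt f f' z)
    (h : f' 1 + I * f' I = 0) : DifferentiableAt ℂ f z := by
  set g : ℂ →L[ℂ] ℂ := (f' 1) • (ContinuousLinearMap.id ℂ ℂ) with hgdef
  have hI : f' I = I * f' 1 := by linear_combination -I * h + f' I * Complex.I_sq
  have hlin : ∀ x : ℂ, f' x = x * f' 1 := by
    intro x
    have h1 : f' x = x.re • f' 1 + x.im • f' I := by
      rw [← f'.map_smul, ← f'.map_smul, ← f'.map_add]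
      congr 1
      apply Complex.ext <;> simp
    rw [h1, hI, Complex.real_smul, Complex.real_smul]
    linear_combination (f' 1) * Complex.re_add_im x
  have hg : g.restrictScalars ℝ = f' := by
    ext x
    simp [hgdef, hlin x, smul_eq_mul]
    ring
  exact (hasFDerivAt_of_restrictScalars ℝ hf hg).differentiableAt

lemma weight_bound {ε : ℝ} (hε : 0 < ε) {t : ℝ} (ht : 0 ≤ t) :
    t ^ 2 * Real.exp (-(2 * ε * t)) ≤ ε⁻¹ ^ 2 := by
  have h1 : ε * t ≤ Real.exp (ε * t) := by linarith [Real.add_one_le_exp (ε * t)]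
  have hmul : Real.exp (-(ε * t)) * Real.exp (ε * t) = 1 := by
    rw [← Real.exp_add]; simp
  have h2 : t * Real.exp (-(ε * t)) ≤ ε⁻¹ := by
    nlinarith [mul_le_mul_of_nonneg_left h1 (Real.exp_pos (-(ε * t))).le,
      mul_inv_cancel₀ hε.ne', inv_nonneg.2 hε.le, Real.exp_pos (-(ε * t))]
  have h3 : Real.exp (-(2 * ε * t)) = Real.exp (-(ε * t)) * Real.exp (-(ε * t)) := by
    rw [← Real.exp_add]; ring_nf
  have h4 : 0 ≤ t * Real.exp (-(ε * t)) := mul_nonneg ht (Real.exp_pos _).le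
  calc t ^ 2 * Real.exp (-(2 * ε * t)) = (t * Real.exp (-(ε * t))) ^ 2 := by
        rw [h3]; ring
    _ ≤ ε⁻¹ ^ 2 := by nlinarith [h2, h4]

/-- Correction of a nowhere vanishing holomorphic section by a solution of the
inhomogeneous `∂̄`-equation: `s = χu − zw` is holomorphic, nonzero at `0`, and lies in
the weighted `L²`-space with weight `e^{-4ε|z|}`. -/
theorem corrected_section_properties (ε : ℝ) (hε : 0 < ε)
    (χ : ℂ → ℝ) (hχ : ContDiff ℝ (⊤ : ℕ∞) χ) (hχc : HasCompactSupport χ)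
    (hχ1 : ∀ z : ℂ, ‖z‖ ≤ 1 → χ z = 1)
    (hχ0 : ∀ z : ℂ, 2 ≤ ‖z‖ → χ z = 0)
    (u : ℂ → ℂ) (hu : Differentiable ℂ u) (hu0 : ∀ z, u z ≠ 0)
    (v : ℂ → ℂ)
    (hv : ∀ z : ℂ, z ≠ 0 → v z = dbar (fun w => (χ w : ℂ)) z * u z / z)
    (hv0 : v 0 = 0)
    (w : ℂ → ℂ) (hw : Differentiable ℝ w) (hweq : ∀ z, dbar w z = v z)
    (hwL2 : Integrable (fun z : ℂ =>
      ‖w z‖ ^ 2 * Real.exp (-(2 * ε * ‖z‖)))) :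
    Differentiable ℂ (fun z : ℂ => (χ z : ℂ) * u z - z * w z) ∧
      ((χ (0 : ℂ) : ℂ) * u 0 - (0 : ℂ) * w 0 = u 0 ∧ u 0 ≠ 0) ∧
      Integrable (fun z : ℂ =>
        ‖(χ z : ℂ) * u z - z * w z‖ ^ 2 *
          Real.exp (-(4 * ε * ‖z‖))) := by
  have hχd : Differentiable ℝ (fun y : ℂ => (χ y : ℂ)) :=
    Complex.ofRealCLM.differentiable.comp (hχ.differentiable (by simp))
  -- dbar of χ vanishes at 0
  have hdbarχ0 : dbar (fun y : ℂ => (χ y : ℂ)) 0 = 0 := by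
    have hev : (fun y : ℂ => (χ y : ℂ)) =ᶠ[nhds (0 : ℂ)] fun _ => (1 : ℂ) := by
      filter_upwards [Metric.ball_mem_nhds (0 : ℂ) one_pos] with y hy
      rw [hχ1 y (le_of_lt (by simpa [Metric.mem_ball, Complex.dist_eq] using hy))]
      norm_num
    have : fderiv ℝ (fun y : ℂ => (χ y : ℂ)) 0 = 0 := by
      rw [hev.fderiv_eq, fderiv_fun_const]; rfl
    simp [dbar, this]
  -- the key identity: dbar χ * u = z * dbar w
  have hzero : ∀ z : ℂ, dbar (fun y : ℂ => (χ y : ℂ)) z * u z = z * dbar w z := by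
    intro z
    rcases eq_or_ne z 0 with rfl | hz
    · rw [hdbarχ0]; simp
    · rw [hweq z, hv z hz]
      field_simp
  -- differentiability
  have hdiff : Differentiable ℂ (fun z : ℂ => (χ z : ℂ) * u z - z * w z) := by
    intro z
    have hA := (hχd z).hasFDerivAt
    have hU := ((hu z).hasFDerivAt).restrictScalars ℝ
    have hW := (hw z).hasFDerivAt
    have hs : HasFDerivAt (fun y : ℂ => (χ y : ℂ) * u y - y * w y)
        (((χ z : ℂ) • ((fderiv ℂ u z).restrictScalars ℝ) +
            u z • (fderiv ℝ (fun y : ℂ => (χ y : ℂ)) z)) -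
          (z • (fderiv ℝ w z) + w z • (ContinuousLinearMap.id ℝ ℂ))) z :=
      (hA.mul hU).sub ((hasFDerivAt_id z).mul hW)
    apply diffAt_of_cr hs
    have hUI : (fderiv ℂ u z) I = I * (fderiv ℂ u z) 1 := by
      have := (fderiv ℂ u z).map_smul I (1 : ℂ)
      simpa [smul_eq_mul] using this
    have hz2 := hzero z
    simp only [dbar, Complex.real_smul, smul_eq_mul] at hz2
    push_cast at hz2
    simp only [ContinuousLinearMap.add_apply, ContinuousLinearMap.sub_apply,
      ContinuousLinearMap.smul_apply, ContinuousLinearMap.coe_restrictScalars',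
      ContinuousLinearMap.id_apply, smul_eq_mul]
    linear_combination 2 * hz2 +
      ((χ z : ℂ) * (fderiv ℂ u z) 1 - w z) * Complex.I_sq +
      ((χ z : ℂ) * Complex.I) * hUI
  refine ⟨hdiff, ⟨by rw [hχ1 0 (by simp)]; simp, hu0 0⟩, ?_⟩
  -- integrability
  have hscont : Continuous (fun z : ℂ => (χ z : ℂ) * u z - z * w z) :=
    ((Complex.continuous_ofReal.comp hχ.continuous).mul hu.continuous).sub
      (continuous_id.mul hw.continuous)
  set K : ℂ → ℝ := fun z => χ z * (χ z * (‖u z‖ ^ 2 *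
    Real.exp (-(4 * ε * ‖z‖)))) with hKdef
  have hKc : HasCompactSupport K := hχc.mul_right
  have hKcont : Continuous K := by
    apply hχ.continuous.mul
    apply hχ.continuous.mul
    exact ((continuous_norm.comp hu.continuous).pow 2).mul
      (Real.continuous_exp.comp (continuous_const.mul continuous_norm).neg)
  have hKint : Integrable K := hKcont.integrable_of_hasCompactSupport hKc
  set g : ℂ → ℝ := fun z => 2 * K z +
    (2 * ε⁻¹ ^ 2) * (‖w z‖ ^ 2 * Real.exp (-(2 * ε * ‖z‖))) with hgdef
  have hgint : Integrable g := (hKint.const_mul 2).add (hwL2.const_mul (2 * ε⁻¹ ^ 2))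
  apply hgint.mono'
  · exact Continuous.aestronglyMeasurable (by
      exact ((continuous_norm.comp hscont).pow 2).mul
        (Real.continuous_exp.comp (continuous_const.mul continuous_norm).neg))
  · refine Filter.Eventually.of_forall fun z => ?_
    have hS : ‖(χ z : ℂ) * u z - z * w z‖ ≤
        |χ z| * ‖u z‖ + ‖z‖ * ‖w z‖ := by
      have := norm_sub_le ((χ z : ℂ) * u z) (z * w z)
      simpa [Complex.norm_real, Real.norm_eq_abs] using this
    set S := ‖(χ z : ℂ) * u z - z * w z‖
    set A := |χ z| * ‖u z‖
    set B := ‖z‖ * ‖w z‖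
    have hSnn : 0 ≤ S := norm_nonneg _
    have hAnn : 0 ≤ A := mul_nonneg (abs_nonneg _) (norm_nonneg _)
    have hBnn : 0 ≤ B := mul_nonneg (norm_nonneg _) (norm_nonneg _)
    have h1 : S ^ 2 ≤ 2 * A ^ 2 + 2 * B ^ 2 := by nlinarith [sq_nonneg (A - B)]
    have e4 : Real.exp (-(4 * ε * ‖z‖)) =
        Real.exp (-(2 * ε * ‖z‖)) * Real.exp (-(2 * ε * ‖z‖)) := by
      rw [← Real.exp_add]; ring_nf
    have h2 : S ^ 2 * Real.exp (-(4 * ε * ‖z‖)) ≤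
        (2 * A ^ 2 + 2 * B ^ 2) * Real.exp (-(4 * ε * ‖z‖)) :=
      mul_le_mul_of_nonneg_right h1 (Real.exp_pos _).le
    have h3 : B ^ 2 * Real.exp (-(4 * ε * ‖z‖)) =
        (‖z‖ ^ 2 * Real.exp (-(2 * ε * ‖z‖))) *
          (‖w z‖ ^ 2 * Real.exp (-(2 * ε * ‖z‖))) := by
      rw [e4]; ring
    have h4 : ‖z‖ ^ 2 * Real.exp (-(2 * ε * ‖z‖)) ≤ ε⁻¹ ^ 2 :=
      weight_bound hε (norm_nonneg z)
    have h5 : B ^ 2 * Real.exp (-(4 * ε * ‖z‖)) ≤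
        ε⁻¹ ^ 2 * (‖w z‖ ^ 2 * Real.exp (-(2 * ε * ‖z‖))) := by
      rw [h3]
      exact mul_le_mul_of_nonneg_right h4 (by positivity)
    have hAK : A ^ 2 * Real.exp (-(4 * ε * ‖z‖)) = K z := by
      simp only [hKdef, A]
      rw [mul_pow, _root_.sq_abs]
      ring
    have hnorm : ‖S ^ 2 * Real.exp (-(4 * ε * ‖z‖))‖ =
        S ^ 2 * Real.exp (-(4 * ε * ‖z‖)) :=
      Real.norm_of_nonneg (by positivity)
    rw [hnorm]
    simp only [hgdef]
    nlinarith [h2, h5, hAK]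
end
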